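/- arXiv:1901.00320 — 2 statements merged into one kernel-verified Lean document; each statement's English description precedes it below -/
import Mathlib

section
/- Let C be a left H-category. Then there is a one-to-one correspondence between left H-equivariant right C-modules and right modules over the smash product category C#H. Explicitly, given a left H-equivariant right C-module M, setting M'(X) = M(X) and M'(f#h)(m) = S^{-1}(h)·(M(f)(m)) defines a right (C#H)-module M'; conversely, given a right (C#H)-module M', setting M(X) = M'(X), M(f) = M'(f#1_H), and h·m = M'(id_X # S(h))(m) defines a left H-equivariant right C-module, and these assignments are mutually inverse. -/
open CategoryTheory TensorProduct
noncomputable section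

structure LinCat (K : Type) [Field K] where
  Obj : Type
  Hom : Obj → Obj → Type
  [addHom : ∀ X Y, AddCommGroup (Hom X Y)]
  [modHom : ∀ X Y, Module K (Hom X Y)]
  idm : ∀ X, Hom X X
  comp : ∀ {X Y Z : Obj}, Hom X Y →ₗ[K] Hom Y Z →ₗ[K] Hom X Z
  id_comp : ∀ {X Y : Obj} (f : Hom X Y), comp (idm X) f = f
  comp_id : ∀ {X Y : Obj} (f : Hom X Y), comp f (idm Y) = f
  assoc : ∀ {W X Y Z : Obj} (f : Hom W X) (g : Hom X Y) (h : Hom Y Z),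
    comp (comp f g) h = comp f (comp g h)

attribute [instance] LinCat.addHom LinCat.modHom


variable (K : Type) [Field K] (H : Type) [Ring H] [HopfAlgebra K H]

structure RMod (D : LinCat K) where
  ob : D.Obj → Type
  [addOb : ∀ X, AddCommGroup (ob X)]
  [modOb : ∀ X, Module K (ob X)]
  map : ∀ {X Y : D.Obj}, D.Hom X Y →ₗ[K] (ob Y →ₗ[K] ob X)
  map_id : ∀ X, map (D.idm X) = LinearMap.id
  map_comp : ∀ {X Y Z : D.Obj} (f : D.Hom X Y) (g : D.Hom Y Z),
    map (D.comp f g) = (map f) ∘ₗ (map g)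

attribute [instance] RMod.addOb RMod.modOb

@[ext] structure RModHom {D : LinCat K} (M N : RMod K D) where
  app : ∀ X, M.ob X →ₗ[K] N.ob X
  natural : ∀ {X Y : D.Obj} (f : D.Hom X Y) (m : M.ob Y),
    app X (M.map f m) = N.map f (app Y m)

instance RMod.instCategory (D : LinCat K) : Category (RMod K D) where
  Hom M N := RModHom K M N
  id M := ⟨fun _ => LinearMap.id, by intros; rfl⟩
  comp η θ := ⟨fun X => (θ.app X).comp (η.app X), by
    intro X Y f m
    simp only [LinearMap.comp_apply, η.natural, θ.natural]⟩
  id_comp := by intros; rfl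
  comp_id := by intros; rfl
  assoc := by intros; rfl

namespace RModHom

variable {K H} {D : LinCat K} {M N : RMod K D}

instance : Zero (RModHom K M N) :=
  ⟨⟨fun _ => 0, by intros; simp⟩⟩

instance : Add (RModHom K M N) :=
  ⟨fun η ν => ⟨fun X => η.app X + ν.app X, by
    intro X Y f m
    simp [η.natural, ν.natural]⟩⟩

instance : Neg (RModHom K M N) :=
  ⟨fun η => ⟨fun X => -η.app X, by
    intro X Y f m
    simp [η.natural]⟩⟩

instance : Sub (RModHom K M N) :=
  ⟨fun η ν => ⟨fun X => η.app X - ν.app X, by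
    intro X Y f m
    simp [η.natural, ν.natural]⟩⟩

instance : SMul K (RModHom K M N) :=
  ⟨fun k η => ⟨fun X => k • η.app X, by
    intro X Y f m
    simp [η.natural]⟩⟩

instance : SMul ℕ (RModHom K M N) :=
  ⟨fun n η => ⟨fun X => n • η.app X, by
    intro X Y f m
    simp [η.natural]⟩⟩

instance : SMul ℤ (RModHom K M N) :=
  ⟨fun n η => ⟨fun X => n • η.app X, by
    intro X Y f m
    simp [η.natural]⟩⟩

theorem app_injective :
    Function.Injective (fun (η : RModHom K M N) => η.app) := by
  intro η ν h; ext X m; exact congrFun (congrArg (fun u => (u X : M.ob X → N.ob X)) h) m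

instance : AddCommGroup (RModHom K M N) :=
  Function.Injective.addCommGroup (fun η => η.app) app_injective
    rfl (fun _ _ => rfl) (fun _ => rfl) (fun _ _ => rfl) (fun _ _ => rfl) (fun _ _ => rfl)

instance : Module K (RModHom K M N) :=
  Function.Injective.module K
    ⟨⟨fun η => η.app, rfl⟩, fun _ _ => rfl⟩ app_injective (fun _ _ => rfl)

@[simp] theorem add_app (η ν : RModHom K M N) (X : D.Obj) :
    (η + ν).app X = η.app X + ν.app X := rfl

@[simp] theorem smul_app (k : K) (η : RModHom K M N) (X : D.Obj) :
    (k • η).app X = k • η.app X := rfl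

@[simp] theorem zero_app (X : D.Obj) : (0 : RModHom K M N).app X = 0 := rfl

end RModHom


section PART3
variable (K : Type) [Field K] (H : Type) [Ring H] [HopfAlgebra K H]

structure LeftHCat extends LinCat K where
  act : ∀ X Y, H →ₗ[K] Hom X Y →ₗ[K] Hom X Y
  act_one : ∀ X Y, act X Y 1 = LinearMap.id
  act_mul : ∀ X Y (a b : H), act X Y (a * b) = (act X Y a) ∘ₗ (act X Y b)
  act_idm : ∀ (X : Obj) (h : H),
    act X X h (idm X) = Coalgebra.counit (R := K) h • idm X
  act_comp : ∀ {X Y Z : Obj} (h : H) (u : Hom X Y) (v : Hom Y Z),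
    act X Z h (comp u v) =
      TensorProduct.lift (comp (X := X) (Y := Y) (Z := Z)).flip
        (TensorProduct.map ((act Y Z).flip v) ((act X Y).flip u)
          (Coalgebra.comul (R := K) h))

variable {K H}

/-- The smash product category `C # H`: it has the same objects as `C` and
`Hom (X, Y) = Hom_C(X, Y) ⊗ H`, with composition
`(g # h') ≫ (f # h) = ∑ ((h₁ g) ≫ f) # (h₂ * h')` (i.e. `(f#h)∘(g#h') = ∑ f∘(h₁g) # h₂h'`).
Since the composition is uniquely determined by this formula, we record the smash
product category as a structure whose fields assert that these formulas indeed
define a `K`-linear category. -/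
structure SmashCat (C : LeftHCat K H) where
  comp : ∀ {X Y Z : C.Obj},
    (C.Hom X Y ⊗[K] H) →ₗ[K] (C.Hom Y Z ⊗[K] H) →ₗ[K] (C.Hom X Z ⊗[K] H)
  comp_tmul : ∀ {X Y Z : C.Obj} (u : C.Hom X Y) (h' : H) (v : C.Hom Y Z) (h : H),
    comp (u ⊗ₜ[K] h') (v ⊗ₜ[K] h) =
      TensorProduct.map
        (((C.comp (X := X) (Y := Y) (Z := Z)).flip v) ∘ₗ ((C.act X Y).flip u))
        (LinearMap.mulRight K h')
        (Coalgebra.comul (R := K) h)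
  id_comp : ∀ {X Y : C.Obj} (f : C.Hom X Y ⊗[K] H),
    comp ((C.idm X) ⊗ₜ[K] (1 : H)) f = f
  comp_id : ∀ {X Y : C.Obj} (f : C.Hom X Y ⊗[K] H),
    comp f ((C.idm Y) ⊗ₜ[K] (1 : H)) = f
  assoc : ∀ {W X Y Z : C.Obj} (f : C.Hom W X ⊗[K] H) (g : C.Hom X Y ⊗[K] H)
    (h : C.Hom Y Z ⊗[K] H), comp (comp f g) h = comp f (comp g h)

/-- The underlying `K`-linear category of the smash product category `C # H`. -/
abbrev SmashCat.lin {C : LeftHCat K H} (S : SmashCat C) : LinCat K where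
  Obj := C.Obj
  Hom X Y := C.Hom X Y ⊗[K] H
  idm X := (C.idm X) ⊗ₜ[K] (1 : H)
  comp := S.comp
  id_comp := S.id_comp
  comp_id := S.comp_id
  assoc := S.assoc

section Restrict

variable {C : LeftHCat K H} (S : SmashCat C)

theorem SmashCat.comp_tmul_one {X Y Z : C.Obj} (f : C.Hom X Y) (g : C.Hom Y Z) :
    S.comp (f ⊗ₜ[K] (1 : H)) (g ⊗ₜ[K] (1 : H)) = (C.comp f g) ⊗ₜ[K] (1 : H) := by
  rw [S.comp_tmul]
  rw [show Coalgebra.comul (R := K) (1 : H) = (1 : H ⊗[K] H) from Bialgebra.comul_one]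
  rw [Algebra.TensorProduct.one_def, TensorProduct.map_tmul]
  simp [C.act_one]

/-- Restriction of scalars from `Mod-(C#H)` to `Mod-C`, on objects. -/
def restrictOb (M : RMod K S.lin) : RMod K C.toLinCat where
  ob := M.ob
  map {X Y} := M.map ∘ₗ ((TensorProduct.mk K (C.Hom X Y) H).flip (1 : H))
  map_id X := M.map_id X
  map_comp {X Y Z} f g := by
    show M.map ((C.comp f g) ⊗ₜ[K] (1 : H)) =
      (M.map (f ⊗ₜ[K] (1 : H))) ∘ₗ (M.map (g ⊗ₜ[K] (1 : H)))
    rw [← S.comp_tmul_one]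
    exact M.map_comp _ _

/-- Restriction of scalars on morphisms. -/
def restrictHom {M N : RMod K S.lin} (η : M ⟶ N) :
    restrictOb S M ⟶ restrictOb S N where
  app := η.app
  natural {X Y} f m := η.natural (f ⊗ₜ[K] (1 : H)) m

/-- The restriction of scalars functor `Mod-(C#H) ⥤ Mod-C`. -/
def restrictFunctor : RMod K S.lin ⥤ RMod K C.toLinCat where
  obj := restrictOb S
  map := restrictHom S
  map_id := by intros; rfl
  map_comp := by intros; rfl

/-- The canonical left `H`-action on the values `M(X)` of a right `C#H`-module:
`h • m := M (id_X # (S h)) m`. -/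
def actOn (M : RMod K S.lin) (X : C.Obj) : H →ₗ[K] M.ob X →ₗ[K] M.ob X :=
  M.map ∘ₗ (TensorProduct.mk K (C.Hom X X) H (C.idm X)) ∘ₗ
    (HopfAlgebra.antipode (R := K) (A := H))

/-- The Sweedler-style right-hand side `∑ h₁ • (η X ((S h₂) • m))` of the adjoint
`H`-action on `C`-module morphisms between (restrictions of) `C#H`-modules. -/
def adjRHS {M N : RMod K S.lin} (η : restrictOb S M ⟶ restrictOb S N)
    (h : H) (X : C.Obj) (m : M.ob X) : N.ob X :=
  TensorProduct.lift
    (((LinearMap.llcomp (σ₁₂ := RingHom.id K) (σ₂₃ := RingHom.id K) (σ₁₃ := RingHom.id K)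
        K H (N.ob X) (N.ob X)).flip
        ((η.app X) ∘ₗ (((actOn S M X) ∘ₗ (HopfAlgebra.antipode (R := K) (A := H))).flip m)))
      ∘ₗ (actOn S N X))
    (Coalgebra.comul (R := K) h)

end Restrict
end PART3

section PART4
variable {K : Type} [Field K] {H : Type} [Ring H] [HopfAlgebra K H]

/-- The property that an (unbundled) family of maps is a right module structure over a
`K`-linear category. -/
def IsRModMap (K : Type) [Field K] (D : LinCat K) (ob : D.Obj → Type)
    [∀ X, AddCommGroup (ob X)] [∀ X, Module K (ob X)]
    (map : ∀ X Y : D.Obj, D.Hom X Y →ₗ[K] (ob Y →ₗ[K] ob X)) : Prop :=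
  (∀ X, map X X (D.idm X) = LinearMap.id) ∧
  (∀ (X Y Z : D.Obj) (f : D.Hom X Y) (g : D.Hom Y Z),
    map X Z (D.comp f g) = (map X Y f) ∘ₗ (map Y Z g))

/-- Bundle unbundled right module data into a module. -/
def RMod.mk' (K : Type) [Field K] (D : LinCat K) (ob : D.Obj → Type)
    [∀ X, AddCommGroup (ob X)] [∀ X, Module K (ob X)]
    (map : ∀ X Y : D.Obj, D.Hom X Y →ₗ[K] (ob Y →ₗ[K] ob X))
    (hmap : IsRModMap K D ob map) : RMod K D where
  ob := ob
  map := map _ _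
  map_id := hmap.1
  map_comp := hmap.2 _ _ _

/-- A left `H`-equivariant right `C`-module over a left `H`-category `C`:
a right `C`-module together with left `H`-module structures on its values such that
`h • (M f m) = ∑ M (h₂ • f) (h₁ • m)`. -/
structure EqMod (C : LeftHCat K H) extends RMod K C.toLinCat where
  eact : ∀ X, H →ₗ[K] ob X →ₗ[K] ob X
  eact_one : ∀ X, eact X 1 = LinearMap.id
  eact_mul : ∀ X (a b : H), eact X (a * b) = (eact X a) ∘ₗ (eact X b)
  equivar : ∀ {X Y : C.Obj} (h : H) (f : C.Hom X Y) (m : ob Y),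
    eact X h (map f m) =
      TensorProduct.lift
        (((map (X := X) (Y := Y)).comp ((C.act X Y).flip f)).flip ∘ₗ ((eact Y).flip m))
        (Coalgebra.comul (R := K) h)

/-- Morphisms of `H`-equivariant right `C`-modules: `C`-module morphisms whose
components are `H`-linear. -/
@[ext] structure EqModHom {C : LeftHCat K H} (M N : EqMod C) where
  hom : M.toRMod ⟶ N.toRMod
  hlin : ∀ (X : C.Obj) (h : H) (m : M.ob X),
    hom.app X (M.eact X h m) = N.eact X h (hom.app X m)

instance EqMod.instCategory (C : LeftHCat K H) : Category (EqMod C) where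
  Hom M N := EqModHom M N
  id M := ⟨𝟙 M.toRMod, by intros; rfl⟩
  comp {M N P} η θ := ⟨η.hom ≫ θ.hom, by
    intro X h m
    show θ.hom.app X (η.hom.app X (M.eact X h m)) = _
    rw [η.hlin, θ.hlin]
    rfl⟩
  id_comp := by intros; rfl
  comp_id := by intros; rfl
  assoc := by intros; rfl

/-- A left `H`-module, unbundled (an object of `H`-Mod). -/
structure HLMod (K : Type) [Field K] (H : Type) [Ring H] [HopfAlgebra K H] where
  V : Type
  [addV : AddCommGroup V]
  [modV : Module K V]
  act : H →ₗ[K] V →ₗ[K] V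
  act_one : act 1 = LinearMap.id
  act_mul : ∀ a b : H, act (a * b) = (act a) ∘ₗ (act b)

attribute [instance] HLMod.addV HLMod.modV

/-- Morphisms of left `H`-modules. -/
@[ext] structure HLModHom (M N : HLMod K H) where
  f : M.V →ₗ[K] N.V
  hf : ∀ (h : H) (m : M.V), f (M.act h m) = N.act h (f m)

instance HLMod.instCategory : Category (HLMod K H) where
  Hom M N := HLModHom M N
  id M := ⟨LinearMap.id, by intros; rfl⟩
  comp {M N P} g₁ g₂ := ⟨g₂.f ∘ₗ g₁.f, by
    intro h m
    show g₂.f (g₁.f (M.act h m)) = _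
    rw [g₁.hf, g₂.hf]
    rfl⟩
  id_comp := by intros; rfl
  comp_id := by intros; rfl
  assoc := by intros; rfl

/-- The `H`-invariants `M^H = {m | h • m = ε(h) m}` of a left `H`-module. -/
def HLMod.invariants (M : HLMod K H) : Submodule K M.V where
  carrier := {v | ∀ h : H, M.act h v = Coalgebra.counit (R := K) h • v}
  add_mem' := by
    intro a b ha hb h
    rw [map_add, ha h, hb h, smul_add]
  zero_mem' := by
    intro h
    rw [map_zero, smul_zero]
  smul_mem' := by
    intro k v hv h
    rw [map_smul, hv h, smul_comm]

/-- The `H`-invariants functor `H-Mod ⥤ Vect_K`. -/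
def invariantsFunctor : HLMod K H ⥤ ModuleCat K where
  obj M := ModuleCat.of K M.invariants
  map {M N} g := ModuleCat.ofHom (g.f.restrict (p := M.invariants) (q := N.invariants)
    (by
      intro v hv h
      rw [← g.hf, hv h]
      exact map_smul g.f _ _))
  map_id := by intros; rfl
  map_comp := by intros; rfl

/-- An element of a left `H`-module is locally finite if it generates a finite
dimensional submodule. -/
def HLMod.LocFinElt (M : HLMod K H) (v : M.V) : Prop :=
  FiniteDimensional K (Submodule.span K (Set.range (fun h : H => M.act h v)))

/-- The locally finite part `M^{(H)}` of a left `H`-module. -/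
def HLMod.locFin (M : HLMod K H) : Submodule K M.V where
  carrier := {v | M.LocFinElt v}
  add_mem' := by
    intro a b ha hb
    haveI h1 : FiniteDimensional K
        (Submodule.span K (Set.range (fun h : H => M.act h a))) := ha
    haveI h2 : FiniteDimensional K
        (Submodule.span K (Set.range (fun h : H => M.act h b))) := hb
    have hsub : Set.range (fun h : H => M.act h (a + b)) ⊆
        ↑(Submodule.span K (Set.range (fun h : H => M.act h a)) ⊔
          Submodule.span K (Set.range (fun h : H => M.act h b))) := by
      rintro x ⟨h, rfl⟩
      show M.act h (a + b) ∈ _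
      have hadd : M.act h (a + b) = M.act h a + M.act h b := by simp
      rw [hadd]
      exact Submodule.add_mem _
        (Submodule.mem_sup_left (Submodule.subset_span ⟨h, rfl⟩))
        (Submodule.mem_sup_right (Submodule.subset_span ⟨h, rfl⟩))
    have hle := Submodule.span_le.2 hsub
    haveI h3 : FiniteDimensional K
        ↥(Submodule.span K (Set.range (fun h : H => M.act h a)) ⊔
          Submodule.span K (Set.range (fun h : H => M.act h b))) :=
      Submodule.finiteDimensional_sup _ _
    exact Submodule.finiteDimensional_of_le hle
  zero_mem' := by
    have hsub : Set.range (fun h : H => M.act h (0 : M.V)) ⊆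
        ↑(⊥ : Submodule K M.V) := by rintro x ⟨h, rfl⟩; simp
    have hle := Submodule.span_le.2 hsub
    exact Submodule.finiteDimensional_of_le (S₂ := ⊥) hle
  smul_mem' := by
    intro k v hv
    haveI h1 : FiniteDimensional K
        (Submodule.span K (Set.range (fun h : H => M.act h v))) := hv
    have hsub : Set.range (fun h : H => M.act h (k • v)) ⊆
        ↑(Submodule.span K (Set.range (fun h : H => M.act h v))) := by
      rintro x ⟨h, rfl⟩
      show M.act h (k • v) ∈ _
      have hs : M.act h (k • v) = k • M.act h v := by simp
      rw [hs]
      exact Submodule.smul_mem _ _ (Submodule.subset_span ⟨h, rfl⟩)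
    exact Submodule.finiteDimensional_of_le (Submodule.span_le.2 hsub)

/-- A left `H`-module is locally finite iff every element is. -/
def HLMod.IsLocFin (M : HLMod K H) : Prop := ∀ v : M.V, M.LocFinElt v

end PART4

section PART5
open CategoryTheory.Limits
variable {K : Type} [Field K] {H : Type} [Ring H] [HopfAlgebra K H]

instance {D : LinCat K} (M N : RMod K D) : AddCommGroup (M ⟶ N) :=
  inferInstanceAs (AddCommGroup (RModHom K M N))

instance {D : LinCat K} (M N : RMod K D) : Module K (M ⟶ N) :=
  inferInstanceAs (Module K (RModHom K M N))

/-- Post-composition with a module morphism, as a linear map on `Hom`-spaces. -/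
def postcompLin {D : LinCat K} (M : RMod K D) {N P : RMod K D} (θ : N ⟶ P) :
    (M ⟶ N) →ₗ[K] (M ⟶ P) where
  toFun η := η ≫ θ
  map_add' η ν := by
    apply RModHom.app_injective
    funext X
    apply LinearMap.ext
    intro m
    show θ.app X ((η.app X + ν.app X) m) = θ.app X (η.app X m) + θ.app X (ν.app X m)
    rw [LinearMap.add_apply, map_add]
  map_smul' k η := by
    apply RModHom.app_injective
    funext X
    apply LinearMap.ext
    intro m
    show θ.app X ((k • η.app X) m) = k • θ.app X (η.app X m)
    rw [LinearMap.smul_apply, map_smul]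

/-- The (covariant) Hom-functor `Hom(M, -) : Mod-D ⥤ Vect_K` for a module `M` over a
`K`-linear category `D`. -/
def homFunctor {D : LinCat K} (M : RMod K D) : RMod K D ⥤ ModuleCat K where
  obj N := ModuleCat.of K (M ⟶ N)
  map {N P} θ := ModuleCat.ofHom (postcompLin M θ)
  map_id := by intros; rfl
  map_comp := by intros; rfl

/-- The representable right module `h_X = Hom_D(-, X)`. -/
def reprR (D : LinCat K) (X : D.Obj) : RMod K D where
  ob Y := D.Hom Y X
  map {Y Z} := D.comp (X := Y) (Y := Z) (Z := X)
  map_id Y := by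
    apply LinearMap.ext
    intro g
    exact D.id_comp g
  map_comp {Y Z W} f g := by
    apply LinearMap.ext
    intro m
    exact D.assoc f g m

/-- A right module over a `K`-linear category is finitely generated if it admits a
finite family of generators. -/
def RMod.FG {D : LinCat K} (M : RMod K D) : Prop :=
  ∃ (n : ℕ) (Xs : Fin n → D.Obj) (ms : ∀ i, M.ob (Xs i)),
    ∀ (Y : D.Obj) (y : M.ob Y), ∃ f : ∀ i, D.Hom Y (Xs i),
      y = ∑ i, M.map (f i) (ms i)

/-- A submodule of a right module over a `K`-linear category. -/
@[ext] structure RSubmod {D : LinCat K} (M : RMod K D) where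
  sub : ∀ X, Submodule K (M.ob X)
  closed : ∀ {X Y : D.Obj} (f : D.Hom X Y) (m : M.ob Y), m ∈ sub Y → M.map f m ∈ sub X

instance {D : LinCat K} (M : RMod K D) : PartialOrder (RSubmod M) where
  le A B := ∀ X, A.sub X ≤ B.sub X
  le_refl A X := le_rfl
  le_trans A B C hab hbc X := (hab X).trans (hbc X)
  le_antisymm A B hab hba := by
    ext X x
    exact ⟨fun h => hab X h, fun h => hba X h⟩

/-- A right module over a `K`-linear category is noetherian if its submodules satisfy
the ascending chain condition. -/
def RMod.Noetherian {D : LinCat K} (M : RMod K D) : Prop :=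
  ∀ f : ℕ →o RSubmod M, ∃ n, ∀ m, n ≤ m → f m = f n

/-- A `K`-linear category is right noetherian if all the representable right modules
are noetherian. -/
def LinCat.RightNoetherian (D : LinCat K) : Prop :=
  ∀ X : D.Obj, (reprR D X).Noetherian

/-- A left `H`-category is `H`-locally finite if all its `Hom`-spaces are locally
finite `H`-modules. -/
def LeftHCat.LocFin (C : LeftHCat K H) : Prop :=
  ∀ (X Y : C.Obj) (f : C.Hom X Y),
    FiniteDimensional K (Submodule.span K (Set.range (fun h : H => C.act X Y h f)))

/-- A right `C#H`-module is `H`-locally finite (i.e. belongs to `mod-(C#H)`) if each of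
its values is a locally finite `H`-module for the canonical `H`-action. -/
def RMod.HLocFin {C : LeftHCat K H} {S : SmashCat C} (M : RMod K S.lin) : Prop :=
  ∀ (X : C.Obj) (v : M.ob X),
    FiniteDimensional K (Submodule.span K (Set.range (fun h : H => actOn S M X h v)))

/-- The property of being a Grothendieck category: abelian, cocomplete, with exact
filtered colimits (AB5) and a separator. -/
def IsGrothendieckCat (A : Type*) [Category A] : Prop :=
  ∃ (_ : Abelian A) (_ : HasColimits A) (hf : HasFilteredColimits A),
    @AB5 A _ hf ∧ ∃ G : A, IsSeparator G

end PART5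

section PART6
open CategoryTheory.Limits ZeroObject

/-- A first-quadrant cohomological spectral sequence in an abelian category `A`,
with second page `E₂` and converging to the graded abutment `abut`. -/
structure FirstQuadrantCohomSS (A : Type*) [Category A] [Abelian A]
    (E₂ : ℤ → ℤ → A) (abut : ℤ → A) where
  /-- the pages of the spectral sequence, defined for `r ≥ 2` -/
  page : ℕ → ℤ → ℤ → A
  /-- the second page is the given `E₂` -/
  pageTwo : ∀ p q : ℤ, 0 ≤ p → 0 ≤ q → (page 2 p q ≅ E₂ p q)
  /-- first quadrant: pages vanish outside `p, q ≥ 0` -/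
  vanish : ∀ (r : ℕ) (p q : ℤ), p < 0 ∨ q < 0 → IsZero (page r p q)
  /-- the differentials, of bidegree `(r, 1 - r)` -/
  d : ∀ (r : ℕ) (p q : ℤ), page r p q ⟶ page r (p + r) (q + 1 - r)
  d_comp_d : ∀ (r : ℕ) (p q : ℤ), d r p q ≫ d r (p + r) (q + 1 - r) = 0
  /-- each page is the homology of the previous one -/
  turn : ∀ (r : ℕ) (p q : ℤ), 2 ≤ r →
    (page (r + 1) (p + r) (q + 1 - r) ≅
      (CategoryTheory.ShortComplex.mk (d r p q) (d r (p + r) (q + 1 - r))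
        (d_comp_d r p q)).homology)
  /-- the page at which position `(p,q)` has stabilized -/
  stab : ℤ → ℤ → ℕ
  stab_ge : ∀ p q, 2 ≤ stab p q
  hstab : ∀ (p q : ℤ) (r : ℕ), stab p q ≤ r →
    Nonempty (page r p q ≅ page (stab p q) p q)
  /-- a (finite, exhaustive) decreasing filtration on each piece of the abutment -/
  filt : ∀ n : ℤ, ℤ → Subobject (abut n)
  filt_antitone : ∀ n, Antitone (filt n)
  filt_top : ∀ (n p : ℤ), 0 ≤ n → p ≤ 0 → filt n p = ⊤
  filt_bot : ∀ (n p : ℤ), 0 ≤ n → n < p → filt n p = ⊥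
  /-- the graded pieces of the filtration are the stable values of the pages -/
  graded : ∀ (n p : ℤ), 0 ≤ p → p ≤ n →
    Nonempty ((cokernel (Subobject.ofLE (filt n (p + 1)) (filt n p)
      (filt_antitone n (by omega)))) ≅ page (stab p (n - p)) p (n - p))

end PART6

section PART7
open CategoryTheory.Limits
variable (K : Type) [Field K] (H : Type) [Ring H] [HopfAlgebra K H]

/-- The property that a linear map `V →ₗ V ⊗ H` is a (counital, coassociative) right
`H`-comodule structure. -/
def IsComodStr (V : Type) [AddCommGroup V] [Module K V]
    (coact : V →ₗ[K] V ⊗[K] H) : Prop :=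
  ((TensorProduct.rid K V).toLinearMap ∘ₗ
      (LinearMap.lTensor V (Coalgebra.counit (R := K) (A := H))) ∘ₗ coact = LinearMap.id) ∧
  ((TensorProduct.assoc K V H H).toLinearMap ∘ₗ (LinearMap.rTensor H coact) ∘ₗ coact =
      (LinearMap.lTensor V (Coalgebra.comul (R := K) (A := H))) ∘ₗ coact)

/-- A right `H`-comodule (an object of `Comod-H`). -/
structure HComod where
  V : Type
  [addV : AddCommGroup V]
  [modV : Module K V]
  coact : V →ₗ[K] V ⊗[K] H
  isComod : IsComodStr K H V coact

attribute [instance] HComod.addV HComod.modV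

variable {K H}

/-- Morphisms of right `H`-comodules. -/
@[ext] structure HComodHom (M N : HComod K H) where
  f : M.V →ₗ[K] N.V
  hf : ∀ m : M.V, N.coact (f m) = (LinearMap.rTensor H f) (M.coact m)

instance HComod.instCategory : Category (HComod K H) where
  Hom M N := HComodHom M N
  id M := ⟨LinearMap.id, by
    intro m
    show M.coact m = (LinearMap.rTensor H LinearMap.id) (M.coact m)
    rw [LinearMap.rTensor_id]
    rfl⟩
  comp {M N P} g₁ g₂ := ⟨g₂.f ∘ₗ g₁.f, by
    intro m
    show P.coact (g₂.f (g₁.f m)) = _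
    rw [g₂.hf, g₁.hf]
    rw [← LinearMap.comp_apply, ← LinearMap.rTensor_comp]⟩
  id_comp := by intros; rfl
  comp_id := by intros; rfl
  assoc := by intros; rfl

/-- The `H`-coinvariants `M^{coH} = {m | ρ(m) = m ⊗ 1}` of a right `H`-comodule. -/
def HComod.coinvariants (M : HComod K H) : Submodule K M.V where
  carrier := {v | M.coact v = v ⊗ₜ[K] (1 : H)}
  add_mem' := by
    intro a b ha hb
    show M.coact (a + b) = (a + b) ⊗ₜ[K] (1 : H)
    rw [map_add, ha, hb, TensorProduct.add_tmul]
  zero_mem' := by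
    show M.coact 0 = (0 : M.V) ⊗ₜ[K] (1 : H)
    rw [map_zero, TensorProduct.zero_tmul]
  smul_mem' := by
    intro k v hv
    show M.coact (k • v) = (k • v) ⊗ₜ[K] (1 : H)
    rw [map_smul, hv, TensorProduct.smul_tmul']

/-- The `H`-coinvariants functor `Comod-H ⥤ Vect_K`. -/
def coinvariantsFunctor : HComod K H ⥤ ModuleCat K where
  obj M := ModuleCat.of K M.coinvariants
  map {M N} g := ModuleCat.ofHom (g.f.restrict (p := M.coinvariants) (q := N.coinvariants)
    (by
      intro v hv
      show N.coact (g.f v) = g.f v ⊗ₜ[K] 1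
      rw [g.hf, hv]
      simp))
  map_id := by intros; rfl
  map_comp := by intros; rfl

variable (K H)

/-- A right co-`H`-category: a `K`-linear category enriched in right `H`-comodules,
i.e. `ρ(id_X) = id_X ⊗ 1` and `ρ(v ∘ u) = ∑ v₀ ∘ u₀ ⊗ v₁ u₁`. -/
structure CoHCat extends LinCat K where
  coact : ∀ X Y, Hom X Y →ₗ[K] Hom X Y ⊗[K] H
  isComod : ∀ X Y, IsComodStr K H (Hom X Y) (coact X Y)
  coact_idm : ∀ X, coact X X (idm X) = (idm X) ⊗ₜ[K] (1 : H)
  coact_comp : ∀ {X Y Z : Obj} (u : Hom X Y) (v : Hom Y Z),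
    coact X Z (comp u v) =
      ((TensorProduct.map (TensorProduct.lift (comp (X := X) (Y := Y) (Z := Z)))
          ((LinearMap.mul' K H) ∘ₗ (TensorProduct.comm K H H).toLinearMap)) ∘ₗ
        (TensorProduct.tensorTensorTensorComm K (Hom X Y) H (Hom Y Z) H).toLinearMap)
      ((coact X Y u) ⊗ₜ[K] (coact Y Z v))

variable {K H}

/-- A left module over a `K`-linear category: a `K`-linear covariant functor to
vector spaces. -/
structure LMod (D : LinCat K) where
  ob : D.Obj → Type
  [addOb : ∀ X, AddCommGroup (ob X)]
  [modOb : ∀ X, Module K (ob X)]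
  map : ∀ {X Y : D.Obj}, D.Hom X Y →ₗ[K] (ob X →ₗ[K] ob Y)
  map_id : ∀ X, map (D.idm X) = LinearMap.id
  map_comp : ∀ {X Y Z : D.Obj} (f : D.Hom X Y) (g : D.Hom Y Z),
    map (D.comp f g) = (map g) ∘ₗ (map f)

attribute [instance] LMod.addOb LMod.modOb

/-- A morphism of left modules over a `K`-linear category. -/
@[ext] structure LModHom {D : LinCat K} (M N : LMod D) where
  app : ∀ X, M.ob X →ₗ[K] N.ob X
  natural : ∀ {X Y : D.Obj} (f : D.Hom X Y) (m : M.ob X),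
    app Y (M.map f m) = N.map f (app X m)

instance LMod.instCategory (D : LinCat K) : Category (LMod D) where
  Hom M N := LModHom M N
  id M := ⟨fun _ => LinearMap.id, by intros; rfl⟩
  comp η θ := ⟨fun X => (θ.app X).comp (η.app X), by
    intro X Y f m
    simp only [LinearMap.comp_apply, η.natural, θ.natural]⟩
  id_comp := by intros; rfl
  comp_id := by intros; rfl
  assoc := by intros; rfl

/-- The representable left module `ₓh = Hom_D(X, -)`. -/
def reprL (D : LinCat K) (X : D.Obj) : LMod D where
  ob Y := D.Hom X Y
  map {Y Z} := (D.comp (X := X) (Y := Y) (Z := Z)).flip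
  map_id Y := by
    apply LinearMap.ext
    intro g
    exact D.comp_id g
  map_comp {Y Z W} f g := by
    apply LinearMap.ext
    intro m
    exact (D.assoc m f g).symm

/-- A left module over a `K`-linear category is finitely generated if it admits a
finite family of generators. -/
def LMod.FG {D : LinCat K} (M : LMod D) : Prop :=
  ∃ (n : ℕ) (Xs : Fin n → D.Obj) (ms : ∀ i, M.ob (Xs i)),
    ∀ (Y : D.Obj) (y : M.ob Y), ∃ f : ∀ i, D.Hom (Xs i) Y,
      y = ∑ i, M.map (f i) (ms i)

/-- A submodule of a left module over a `K`-linear category. -/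
@[ext] structure LSubmod {D : LinCat K} (M : LMod D) where
  sub : ∀ X, Submodule K (M.ob X)
  closed : ∀ {X Y : D.Obj} (f : D.Hom X Y) (m : M.ob X), m ∈ sub X → M.map f m ∈ sub Y

instance {D : LinCat K} (M : LMod D) : PartialOrder (LSubmod M) where
  le A B := ∀ X, A.sub X ≤ B.sub X
  le_refl A X := le_rfl
  le_trans A B C hab hbc X := (hab X).trans (hbc X)
  le_antisymm A B hab hba := by
    ext X x
    exact ⟨fun h => hab X h, fun h => hba X h⟩

/-- A left module is noetherian if its submodules satisfy the ascending chain
condition. -/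
def LMod.Noetherian {D : LinCat K} (M : LMod D) : Prop :=
  ∀ f : ℕ →o LSubmod M, ∃ n, ∀ m, n ≤ m → f m = f n

/-- A `K`-linear category is left noetherian if all representable left modules are
noetherian. -/
def LinCat.LeftNoetherian (D : LinCat K) : Prop :=
  ∀ X : D.Obj, (reprL D X).Noetherian

/-- The Sweedler right-hand side `∑ M(f₀)(m₀) ⊗ f₁ m₁` of the compatibility condition
for relative `(D,H)`-Hopf modules. -/
def relHopfRHS {D : CoHCat K H} (M : LMod D.toLinCat)
    {X Y : D.Obj} (ρf : D.Hom X Y ⊗[K] H) (ρm : M.ob X ⊗[K] H) : M.ob Y ⊗[K] H :=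
  ((TensorProduct.map (TensorProduct.lift (M.map (X := X) (Y := Y)))
      (LinearMap.mul' K H)) ∘ₗ
    (TensorProduct.tensorTensorTensorComm K (D.Hom X Y) H (M.ob X) H).toLinearMap)
  (ρf ⊗ₜ[K] ρm)

/-- A relative `(D,H)`-Hopf module over a right co-`H`-category `D`. -/
structure RelHopfMod (D : CoHCat K H) extends LMod D.toLinCat where
  coact : ∀ X, ob X →ₗ[K] ob X ⊗[K] H
  isComod : ∀ X, IsComodStr K H (ob X) (coact X)
  compat : ∀ {X Y : D.Obj} (f : D.Hom X Y) (m : ob X),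
    coact Y (map f m) = relHopfRHS toLMod (D.coact X Y f) (coact X m)

/-- Morphisms of relative `(D,H)`-Hopf modules: `D`-module morphisms whose components
are `H`-colinear. -/
@[ext] structure RelHopfHom {D : CoHCat K H} (M N : RelHopfMod D) where
  hom : M.toLMod ⟶ N.toLMod
  colin : ∀ (X : D.Obj) (m : M.ob X),
    N.coact X (hom.app X m) = (LinearMap.rTensor H (hom.app X)) (M.coact X m)

instance RelHopfMod.instCategory (D : CoHCat K H) : Category (RelHopfMod D) where
  Hom M N := RelHopfHom M N
  id M := ⟨𝟙 M.toLMod, by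
    intro X m
    show M.coact X m = (LinearMap.rTensor H LinearMap.id) (M.coact X m)
    rw [LinearMap.rTensor_id]
    rfl⟩
  comp {M N P} η θ := ⟨η.hom ≫ θ.hom, by
    intro X m
    show P.coact X (θ.hom.app X (η.hom.app X m)) = _
    rw [θ.colin, η.colin, ← LinearMap.comp_apply, ← LinearMap.rTensor_comp]
    rfl⟩
  id_comp := by intros; rfl
  comp_id := by intros; rfl
  assoc := by intros; rfl

namespace LModHom

variable {D : LinCat K} {M N : LMod D}

instance : Zero (LModHom M N) := ⟨⟨fun _ => 0, by intros; simp⟩⟩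

instance : Add (LModHom M N) :=
  ⟨fun η ν => ⟨fun X => η.app X + ν.app X, by
    intro X Y f m
    simp [η.natural, ν.natural]⟩⟩

instance : Neg (LModHom M N) :=
  ⟨fun η => ⟨fun X => -η.app X, by intro X Y f m; simp [η.natural]⟩⟩

instance : Sub (LModHom M N) :=
  ⟨fun η ν => ⟨fun X => η.app X - ν.app X, by
    intro X Y f m
    simp [η.natural, ν.natural]⟩⟩

instance : SMul K (LModHom M N) :=
  ⟨fun k η => ⟨fun X => k • η.app X, by intro X Y f m; simp [η.natural]⟩⟩

instance : SMul ℕ (LModHom M N) :=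
  ⟨fun n η => ⟨fun X => n • η.app X, by intro X Y f m; simp [η.natural]⟩⟩

instance : SMul ℤ (LModHom M N) :=
  ⟨fun n η => ⟨fun X => n • η.app X, by intro X Y f m; simp [η.natural]⟩⟩

theorem app_injective :
    Function.Injective (fun (η : LModHom M N) => η.app) := by
  intro η ν h; ext X m; exact congrFun (congrArg (fun u => (u X : M.ob X → N.ob X)) h) m

instance : AddCommGroup (LModHom M N) :=
  Function.Injective.addCommGroup (fun η => η.app) app_injective
    rfl (fun _ _ => rfl) (fun _ => rfl) (fun _ _ => rfl) (fun _ _ => rfl) (fun _ _ => rfl)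

instance : Module K (LModHom M N) :=
  Function.Injective.module K
    ⟨⟨fun η => η.app, rfl⟩, fun _ _ => rfl⟩ app_injective (fun _ _ => rfl)

end LModHom

instance {D : LinCat K} (M N : LMod D) : AddCommGroup (M ⟶ N) :=
  inferInstanceAs (AddCommGroup (LModHom M N))

instance {D : LinCat K} (M N : LMod D) : Module K (M ⟶ N) :=
  inferInstanceAs (Module K (LModHom M N))

/-- Post-composition with a module morphism, as a linear map on `Hom`-spaces. -/
def postcompLinL {D : LinCat K} (M : LMod D) {N P : LMod D} (θ : N ⟶ P) :
    (M ⟶ N) →ₗ[K] (M ⟶ P) where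
  toFun η := η ≫ θ
  map_add' η ν := by
    apply LModHom.app_injective
    funext X
    apply LinearMap.ext
    intro m
    show θ.app X ((η.app X + ν.app X) m) = θ.app X (η.app X m) + θ.app X (ν.app X m)
    rw [LinearMap.add_apply, map_add]
  map_smul' k η := by
    apply LModHom.app_injective
    funext X
    apply LinearMap.ext
    intro m
    show θ.app X ((k • η.app X) m) = k • θ.app X (η.app X m)
    rw [LinearMap.smul_apply, map_smul]

/-- The (covariant) Hom-functor `Hom(M, -) : D-Mod ⥤ Vect_K` for a left module `M` over
a `K`-linear category `D`. -/
def homFunctorL {D : LinCat K} (M : LMod D) : LMod D ⥤ ModuleCat K where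
  obj N := ModuleCat.of K (M ⟶ N)
  map {N P} θ := ModuleCat.ofHom (postcompLinL M θ)
  map_id := by intros; rfl
  map_comp := by intros; rfl

end PART7

section Statement1
variable {K : Type} [Field K] {H : Type} [Ring H] [HopfAlgebra K H]

/-- The property that unbundled data `(map, act)` is a left `H`-equivariant right
`C`-module structure: `map` is a right `C`-module structure, each `act X` is a left
`H`-module structure, and `h • (M f m) = ∑ M (h₂ f) (h₁ m)`. -/
def IsEqModData (C : LeftHCat K H) (ob : C.Obj → Type)
    [∀ X, AddCommGroup (ob X)] [∀ X, Module K (ob X)]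
    (map : ∀ X Y : C.Obj, C.Hom X Y →ₗ[K] (ob Y →ₗ[K] ob X))
    (act : ∀ X, H →ₗ[K] ob X →ₗ[K] ob X) : Prop :=
  IsRModMap K C.toLinCat ob map ∧
  (∀ X, act X 1 = LinearMap.id) ∧
  (∀ X (a b : H), act X (a * b) = (act X a) ∘ₗ (act X b)) ∧
  (∀ (X Y : C.Obj) (h : H) (f : C.Hom X Y) (m : ob Y),
    act X h (map X Y f m) =
      TensorProduct.lift
        (((map X Y).comp ((C.act X Y).flip f)).flip ∘ₗ ((act Y).flip m))
        (Coalgebra.comul (R := K) h))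

namespace Stmt1Aux
open Coalgebra

variable {K : Type} [Field K]

section Helpers
variable {A W : Type} [AddCommGroup A] [Module K A] [Coalgebra K A]
  [AddCommGroup W] [Module K W]

lemma lift_comul_repr (B : A →ₗ[K] A →ₗ[K] W) {a : A} {ι : Type*} (r : Coalgebra.Repr K a ι) :
    TensorProduct.lift B (Coalgebra.comul (R := K) a) =
      ∑ i ∈ r.index, B (r.left i) (r.right i) := by
  rw [← r.eq, map_sum]; simp

lemma sum_counit_smul_right {a : A} {ι : Type*} (r : Coalgebra.Repr K a ι) :
    ∑ i ∈ r.index, Coalgebra.counit (R := K) (r.left i) • r.right i = a := by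
  have h := Coalgebra.sum_counit_tmul_eq (R := K) r
  have h2 := congrArg (TensorProduct.lid K A) h
  rw [map_sum] at h2
  simp only [TensorProduct.lid_tmul, one_smul] at h2
  exact h2

lemma sum_counit_smul_left {a : A} {ι : Type*} (r : Coalgebra.Repr K a ι) :
    ∑ i ∈ r.index, Coalgebra.counit (R := K) (r.right i) • r.left i = a := by
  have h := Coalgebra.sum_tmul_counit_eq (R := K) r
  have h2 := congrArg (TensorProduct.rid K A) h
  rw [map_sum] at h2
  simp only [TensorProduct.rid_tmul, one_smul] at h2
  exact h2

end Helpers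

section Mk3
variable {A B C W : Type} [AddCommGroup A] [Module K A] [AddCommGroup B] [Module K B]
  [AddCommGroup C] [Module K C] [AddCommGroup W] [Module K W]

/-- Build a trilinear map. -/
def mk₃ (f : A → B → C → W)
    (h1 : ∀ x x' y z, f (x + x') y z = f x y z + f x' y z)
    (h2 : ∀ (c : K) x y z, f (c • x) y z = c • f x y z)
    (h3 : ∀ x y y' z, f x (y + y') z = f x y z + f x y' z)
    (h4 : ∀ (c : K) x y z, f x (c • y) z = c • f x y z)
    (h5 : ∀ x y z z', f x y (z + z') = f x y z + f x y z')
    (h6 : ∀ (c : K) x y z, f x y (c • z) = c • f x y z) :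
    A →ₗ[K] B →ₗ[K] C →ₗ[K] W where
  toFun x := LinearMap.mk₂ K (f x) (h3 x) (fun c y z => h4 c x y z) (h5 x)
    (fun c y z => h6 c x y z)
  map_add' x x' := by ext y z; exact h1 x x' y z
  map_smul' c x := by ext y z; exact h2 c x y z

@[simp] lemma mk₃_apply (f : A → B → C → W) (h1 h2 h3 h4 h5 h6) (x y z) :
    mk₃ (K := K) f h1 h2 h3 h4 h5 h6 x y z = f x y z := rfl

end Mk3

section Tri
variable {A W : Type} [AddCommGroup A] [Module K A] [Coalgebra K A]
  [AddCommGroup W] [Module K W]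

/-- Trilinear map applied to a triple tensor. -/
def tri3 (T : A →ₗ[K] A →ₗ[K] A →ₗ[K] W) : A ⊗[K] (A ⊗[K] A) →ₗ[K] W :=
  TensorProduct.lift ((TensorProduct.uncurry (RingHom.id K) A A W) ∘ₗ T)

@[simp] lemma tri3_tmul (T : A →ₗ[K] A →ₗ[K] A →ₗ[K] W) (x y z : A) :
    tri3 T (x ⊗ₜ[K] (y ⊗ₜ[K] z)) = T x y z := by
  simp [tri3]

/-- Coassociativity transport for trilinear expressions. -/
lemma tri_coassoc (T : A →ₗ[K] A →ₗ[K] A →ₗ[K] W) {a : A} {ι κ Λ : Type*} (r : Coalgebra.Repr K a ι)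
    (r1 : ∀ i : ι, Coalgebra.Repr K (r.left i) κ)
    (r2 : ∀ i : ι, Coalgebra.Repr K (r.right i) Λ) :
    ∑ i ∈ r.index, ∑ j ∈ (r1 i).index,
      T ((r1 i).left j) ((r1 i).right j) (r.right i)
    = ∑ i ∈ r.index, ∑ j ∈ (r2 i).index,
      T (r.left i) ((r2 i).left j) ((r2 i).right j) := by
  have h := Coalgebra.sum_tmul_tmul_eq (R := K) r r1 r2
  have := congrArg (tri3 T) h
  simpa [map_sum] using this

end Tri

section Conv
variable {A L : Type} [AddCommGroup A] [Module K A] [Coalgebra K A]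
  [Ring L] [Algebra K L]

/-- Convolution product. -/
def conv (f g : A →ₗ[K] L) : A →ₗ[K] L :=
  LinearMap.mul' K L ∘ₗ TensorProduct.map f g ∘ₗ Coalgebra.comul

/-- Convolution unit. -/
def cunit : A →ₗ[K] L := (Algebra.linearMap K L) ∘ₗ Coalgebra.counit

lemma conv_repr (f g : A →ₗ[K] L) {a : A} {ι : Type*} (r : Coalgebra.Repr K a ι) :
    conv f g a = ∑ i ∈ r.index, f (r.left i) * g (r.right i) := by
  simp only [conv, LinearMap.comp_apply]
  rw [← r.eq, map_sum, map_sum]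
  simp [LinearMap.mul'_apply]

lemma conv_cunit_left (f : A →ₗ[K] L) : conv cunit f = f := by
  ext a
  rw [conv_repr _ _ (ℛ K a)]
  calc ∑ i ∈ (ℛ K a).index, cunit (K := K) ((ℛ K a).left i) * f ((ℛ K a).right i)
      = ∑ i ∈ (ℛ K a).index, Coalgebra.counit (R := K) ((ℛ K a).left i) • f ((ℛ K a).right i) := by
        refine Finset.sum_congr rfl fun i _ => ?_
        simp [cunit, Algebra.smul_def]
    _ = f a := by
        have hf : f (∑ i ∈ (ℛ K a).index,
            Coalgebra.counit (R := K) ((ℛ K a).left i) • (ℛ K a).right i)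
            = ∑ i ∈ (ℛ K a).index,
              Coalgebra.counit (R := K) ((ℛ K a).left i) • f ((ℛ K a).right i) := by
          rw [map_sum]; simp
        rw [← hf, sum_counit_smul_right (ℛ K a)]

lemma conv_cunit_right (f : A →ₗ[K] L) : conv f cunit = f := by
  ext a
  rw [conv_repr _ _ (ℛ K a)]
  calc ∑ i ∈ (ℛ K a).index, f ((ℛ K a).left i) * cunit (K := K) ((ℛ K a).right i)
      = ∑ i ∈ (ℛ K a).index, Coalgebra.counit (R := K) ((ℛ K a).right i) • f ((ℛ K a).left i) := by
        refine Finset.sum_congr rfl fun i _ => ?_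
        rw [cunit]
        simp [Algebra.smul_def, Algebra.commutes]
    _ = f a := by
        have hf : f (∑ i ∈ (ℛ K a).index,
            Coalgebra.counit (R := K) ((ℛ K a).right i) • (ℛ K a).left i)
            = ∑ i ∈ (ℛ K a).index,
              Coalgebra.counit (R := K) ((ℛ K a).right i) • f ((ℛ K a).left i) := by
          rw [map_sum]; simp
        rw [← hf, sum_counit_smul_left (ℛ K a)]

lemma conv_assoc (f g k : A →ₗ[K] L) : conv (conv f g) k = conv f (conv g k) := by
  ext a
  set r := ℛ K a with hr
  rw [conv_repr _ _ r, conv_repr _ _ r]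
  have lhs : ∀ i, conv f g (r.left i) * k (r.right i)
      = ∑ j ∈ (ℛ K (r.left i)).index,
          f ((ℛ K (r.left i)).left j) * g ((ℛ K (r.left i)).right j) * k (r.right i) := by
    intro i
    rw [conv_repr _ _ (ℛ K (r.left i)), Finset.sum_mul]
  have rhs : ∀ i, f (r.left i) * conv g k (r.right i)
      = ∑ j ∈ (ℛ K (r.right i)).index,
          f (r.left i) * (g ((ℛ K (r.right i)).left j) * k ((ℛ K (r.right i)).right j)) := by
    intro i
    rw [conv_repr _ _ (ℛ K (r.right i)), Finset.mul_sum]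
  simp only [lhs, rhs]
  have := tri_coassoc (K := K)
    (mk₃ (fun x y z => f x * g y * k z)
      (by intros; simp [add_mul]) (by intros; simp [smul_mul_assoc])
      (by intros; simp [add_mul, mul_add]) (by intros; simp [mul_smul_comm, smul_mul_assoc])
      (by intros; simp [mul_add]) (by intros; simp [mul_smul_comm]))
    r (fun i => ℛ K (r.left i)) (fun i => ℛ K (r.right i))
  simpa [mul_assoc] using this

lemma conv_inv_unique {f g g' : A →ₗ[K] L} (h1 : conv g f = cunit)
    (h2 : conv f g' = cunit) : g = g' := by
  calc g = conv g cunit := (conv_cunit_right g).symm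
    _ = conv g (conv f g') := by rw [h2]
    _ = conv (conv g f) g' := (conv_assoc _ _ _).symm
    _ = conv cunit g' := by rw [h1]
    _ = g' := conv_cunit_left g'

end Conv

end Stmt1Aux

namespace Stmt1AuxB
open Coalgebra Stmt1Aux

variable {K H : Type} [Field K] [Ring H] [HopfAlgebra K H]

local notation "aS" => HopfAlgebra.antipode (R := K) (A := H)

lemma antipode_one : aS (1 : H) = 1 := by
  have := HopfAlgebra.mul_antipode_rTensor_comul_apply (R := K) (A := H) (1 : H)
  simpa [Algebra.TensorProduct.one_def] using this

lemma counit_antipode (a : H) :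
    Coalgebra.counit (R := K) (aS a) = Coalgebra.counit (R := K) a := by
  set r := ℛ K a with hr
  have h1 : Coalgebra.counit (R := K) (aS a)
      = ∑ i ∈ r.index, Coalgebra.counit (R := K) (r.right i) *
          Coalgebra.counit (R := K) (aS (r.left i)) := by
    conv_lhs => rw [← sum_counit_smul_left (K := K) r]
    rw [map_sum, map_sum]
    refine Finset.sum_congr rfl fun i _ => ?_
    simp [mul_comm]
  have h2 := congrArg (Coalgebra.counit (R := K)) (HopfAlgebra.sum_antipode_mul_eq_algebraMap_counit (R := K) (repr := r))
  rw [map_sum] at h2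
  simp only [Bialgebra.counit_mul, Bialgebra.counit_algebraMap] at h2
  rw [h1, ← h2]
  refine Finset.sum_congr rfl fun i _ => ?_
  ring

-- Pointwise collapse helpers on H (used again later)
lemma sum_counit_smul_right' {a : H} {ι : Type*} (r : Coalgebra.Repr K a ι) :
    ∑ i ∈ r.index, Coalgebra.counit (R := K) (r.left i) • r.right i = a := by
  have h := Coalgebra.sum_counit_tmul_eq (R := K) r
  have h2 := congrArg (TensorProduct.lid K H) h
  rw [map_sum] at h2
  simp only [TensorProduct.lid_tmul, one_smul] at h2
  exact h2

-- mul' on H⊗H is map mul' mul' after tensorTensorTensorComm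
lemma mulmul_ttc :
    (TensorProduct.map (LinearMap.mul' K H) (LinearMap.mul' K H)) ∘ₗ
      (TensorProduct.tensorTensorTensorComm K H H H H).toLinearMap
    = LinearMap.mul' K (H ⊗[K] H) := by
  ext a b c d
  simp [LinearMap.mul'_apply, Algebra.TensorProduct.tmul_mul_tmul]

-- mul' is a coalgebra morphism (pointfree)
lemma comul_comp_mul' :
    (TensorProduct.map (LinearMap.mul' K H) (LinearMap.mul' K H)) ∘ₗ
      (Coalgebra.comul (R := K) (A := H ⊗[K] H))
    = (Coalgebra.comul (R := K) (A := H)) ∘ₗ LinearMap.mul' K H := by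
  have hcomul : (Coalgebra.comul (R := K) (A := H ⊗[K] H))
      = (TensorProduct.tensorTensorTensorComm K H H H H).toLinearMap ∘ₗ
          TensorProduct.map (Coalgebra.comul (R := K)) (Coalgebra.comul (R := K)) := rfl
  rw [hcomul, ← LinearMap.comp_assoc, mulmul_ttc]
  ext a b
  simp [LinearMap.mul'_apply, Bialgebra.comul_mul]

lemma counit_mul' :
    (Coalgebra.counit (R := K) (A := H ⊗[K] H))
    = (Coalgebra.counit (R := K) (A := H)) ∘ₗ LinearMap.mul' K H := by
  ext a b
  simp [LinearMap.mul'_apply, Bialgebra.counit_mul, mul_comm]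

/-- Explicit representation of `comul (a ⊗ₜ b)`. -/
def tensorRepr (a b : H) : Coalgebra.Repr K (a ⊗ₜ[K] b) ((H × H) × (H × H)) where
  index := (ℛ K a).index ×ˢ (ℛ K b).index
  left p := (ℛ K a).left p.1 ⊗ₜ[K] (ℛ K b).left p.2
  right p := (ℛ K a).right p.1 ⊗ₜ[K] (ℛ K b).right p.2
  eq := by
    have : Coalgebra.comul (R := K) (a ⊗ₜ[K] b)
        = (TensorProduct.tensorTensorTensorComm K H H H H)
            (Coalgebra.comul (R := K) a ⊗ₜ[K] Coalgebra.comul (R := K) b) := rfl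
    rw [this, ← (ℛ K a).eq, ← (ℛ K b).eq]
    rw [TensorProduct.sum_tmul]
    rw [map_sum]
    rw [Finset.sum_product]
    refine Finset.sum_congr rfl fun i _ => ?_
    rw [TensorProduct.tmul_sum, map_sum]
    refine Finset.sum_congr rfl fun j _ => ?_
    simp [TensorProduct.tensorTensorTensorComm_tmul]

lemma antipode_mul (a b : H) : aS (a * b) = aS b * aS a := by
  -- convolution inverses of mul' in Hom(H ⊗ H, H)
  have hmapdecomp : TensorProduct.map ((aS : H →ₗ[K] H) ∘ₗ LinearMap.mul' K H) (LinearMap.mul' K H)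
      = (LinearMap.rTensor H (aS : H →ₗ[K] H)) ∘ₗ
          TensorProduct.map (LinearMap.mul' K H) (LinearMap.mul' K H) := by
    ext x y z w
    simp [LinearMap.mul'_apply]
  have h1 : conv (K := K) ((aS : H →ₗ[K] H) ∘ₗ LinearMap.mul' K H) (LinearMap.mul' K H)
      = cunit (K := K) := by
    apply LinearMap.ext
    intro x
    have e1 : conv (K := K) ((aS : H →ₗ[K] H) ∘ₗ LinearMap.mul' K H) (LinearMap.mul' K H) x
        = LinearMap.mul' K H ((LinearMap.rTensor H (aS : H →ₗ[K] H))
            ((TensorProduct.map (LinearMap.mul' K H) (LinearMap.mul' K H))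
              (Coalgebra.comul (R := K) x))) := by
      simp only [conv, LinearMap.comp_apply, hmapdecomp]
    rw [e1]
    have e2 : (TensorProduct.map (LinearMap.mul' K H) (LinearMap.mul' K H))
        (Coalgebra.comul (R := K) x) = Coalgebra.comul (R := K) (LinearMap.mul' K H x) := by
      have := LinearMap.congr_fun (comul_comp_mul' (K := K) (H := H)) x
      simpa using this
    have e3 : Coalgebra.counit (R := K) x
        = Coalgebra.counit (R := K) (LinearMap.mul' K H x) := by
      have := LinearMap.congr_fun (counit_mul' (K := K) (H := H)) x
      simpa using this
    rw [e2, HopfAlgebra.mul_antipode_rTensor_comul_apply (R := K), cunit]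
    simp only [LinearMap.comp_apply, Algebra.linearMap_apply, e3]
  have h2 : conv (K := K) (LinearMap.mul' K H)
      ((LinearMap.mul' K H) ∘ₗ (TensorProduct.map (aS : H →ₗ[K] H) (aS : H →ₗ[K] H)) ∘ₗ
        (TensorProduct.comm K H H).toLinearMap)
      = cunit (K := K) := by
    apply TensorProduct.ext'
    intro a b
    rw [conv_repr _ _ (tensorRepr a b)]
    have step : ∀ (p : (ℛ K a).ι × (ℛ K b).ι),
        LinearMap.mul' K H ((tensorRepr a b).left p) *
          ((LinearMap.mul' K H ∘ₗ (TensorProduct.map (aS : H →ₗ[K] H) (aS : H →ₗ[K] H)) ∘ₗ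
            (TensorProduct.comm K H H).toLinearMap) ((tensorRepr a b).right p))
        = ((ℛ K a).left p.1 * (ℛ K b).left p.2) *
            (aS ((ℛ K b).right p.2) * aS ((ℛ K a).right p.1)) := by
      intro p
      simp [tensorRepr, LinearMap.mul'_apply]
    refine (Finset.sum_congr rfl (fun p _ => step p)).trans ?_
    have hidx : (tensorRepr (K := K) a b).index = (ℛ K a).index ×ˢ (ℛ K b).index := rfl
    rw [hidx, Finset.sum_product]
    have inner : ∀ i, ∑ j ∈ (ℛ K b).index,
        ((ℛ K a).left i * (ℛ K b).left j) * (aS ((ℛ K b).right j) * aS ((ℛ K a).right i))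
        = Coalgebra.counit (R := K) b • ((ℛ K a).left i * aS ((ℛ K a).right i)) := by
      intro i
      have rearrange : ∀ j, ((ℛ K a).left i * (ℛ K b).left j) *
          (aS ((ℛ K b).right j) * aS ((ℛ K a).right i))
          = (ℛ K a).left i * (((ℛ K b).left j * aS ((ℛ K b).right j)) * aS ((ℛ K a).right i)) := by
        intro j; simp only [mul_assoc]
      refine (Finset.sum_congr rfl (fun j _ => rearrange j)).trans ?_
      rw [← Finset.mul_sum, ← Finset.sum_mul]
      rw [HopfAlgebra.sum_mul_antipode_eq_smul (R := K) (repr := ℛ K b)]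
      rw [smul_mul_assoc, one_mul, mul_smul_comm]
    refine (Finset.sum_congr rfl (fun i _ => inner i)).trans ?_
    rw [← Finset.smul_sum]
    rw [HopfAlgebra.sum_mul_antipode_eq_smul (R := K) (repr := ℛ K a)]
    have : cunit (K := K) (a ⊗ₜ[K] b)
        = (Coalgebra.counit (R := K) a * Coalgebra.counit (R := K) b) • (1 : H) := by
      rw [cunit]
      have hc : Coalgebra.counit (R := K) (a ⊗ₜ[K] b)
          = Coalgebra.counit (R := K) a * Coalgebra.counit (R := K) b := by
        rw [counit_mul']
        simp [LinearMap.mul'_apply, Bialgebra.counit_mul]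
      simp [hc, Algebra.smul_def]
    rw [this]
    rw [smul_smul, mul_comm]
  have key := conv_inv_unique h1 h2
  have := congrArg (fun (F : H ⊗[K] H →ₗ[K] H) => F (a ⊗ₜ[K] b)) key
  simpa [LinearMap.mul'_apply] using this

lemma comul_antipode :
    (Coalgebra.comul (R := K) (A := H)) ∘ₗ (aS : H →ₗ[K] H)
    = (TensorProduct.map (aS : H →ₗ[K] H) (aS : H →ₗ[K] H)) ∘ₗ
        (TensorProduct.comm K H H).toLinearMap ∘ₗ (Coalgebra.comul (R := K) (A := H)) := by
  have h1 : Stmt1Aux.conv (K := K)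
      ((TensorProduct.map (aS : H →ₗ[K] H) (aS : H →ₗ[K] H)) ∘ₗ
        (TensorProduct.comm K H H).toLinearMap ∘ₗ (Coalgebra.comul (R := K) (A := H)))
      (Coalgebra.comul (R := K) (A := H)) = Stmt1Aux.cunit (K := K) := by
    apply LinearMap.ext
    intro a
    set r := ℛ K a with hr
    rw [Stmt1Aux.conv_repr _ _ r]
    have step1 : ∀ i, ((TensorProduct.map (aS : H →ₗ[K] H) (aS : H →ₗ[K] H)) ∘ₗ
          (TensorProduct.comm K H H).toLinearMap ∘ₗ (Coalgebra.comul (R := K) (A := H)))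
          (r.left i) * Coalgebra.comul (R := K) (r.right i)
        = ∑ j ∈ (ℛ K (r.left i)).index,
            (aS ((ℛ K (r.left i)).right j) ⊗ₜ[K] aS ((ℛ K (r.left i)).left j)) *
              Coalgebra.comul (R := K) (r.right i) := by
      intro i
      simp only [LinearMap.comp_apply, LinearEquiv.coe_coe]
      conv_lhs => rw [← (ℛ K (r.left i)).eq]
      rw [map_sum, map_sum, Finset.sum_mul]
      refine Finset.sum_congr rfl fun j _ => ?_
      simp
    refine (Finset.sum_congr rfl (fun i _ => step1 i)).trans ?_
    -- trilinear transport along coassociativity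
    have hT := Stmt1Aux.tri_coassoc (K := K)
      (Stmt1Aux.mk₃ (fun x y z => (aS y ⊗ₜ[K] aS x) * Coalgebra.comul (R := K) (A := H) z)
        (by intros; simp only [map_add, map_smul, TensorProduct.add_tmul, TensorProduct.tmul_add, TensorProduct.smul_tmul, TensorProduct.tmul_smul, add_mul, mul_add, smul_mul_assoc, mul_smul_comm]) (by intros; simp only [map_add, map_smul, TensorProduct.add_tmul, TensorProduct.tmul_add, TensorProduct.smul_tmul, TensorProduct.tmul_smul, add_mul, mul_add, smul_mul_assoc, mul_smul_comm]) (by intros; simp only [map_add, map_smul, TensorProduct.add_tmul, TensorProduct.tmul_add, TensorProduct.smul_tmul, TensorProduct.tmul_smul, add_mul, mul_add, smul_mul_assoc, mul_smul_comm]) (by intros; simp only [map_add, map_smul, TensorProduct.add_tmul, TensorProduct.tmul_add, TensorProduct.smul_tmul, TensorProduct.tmul_smul, add_mul, mul_add, smul_mul_assoc, mul_smul_comm]) (by intros; simp only [map_add, map_smul, TensorProduct.add_tmul, TensorProduct.tmul_add, TensorProduct.smul_tmul, TensorProduct.tmul_smul, add_mul, mul_add, smul_mul_assoc, mul_smul_comm])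 (by intros; simp only [map_add, map_smul, TensorProduct.add_tmul, TensorProduct.tmul_add, TensorProduct.smul_tmul, TensorProduct.tmul_smul, add_mul, mul_add, smul_mul_assoc, mul_smul_comm]))
      r (fun i => ℛ K (r.left i)) (fun i => ℛ K (r.right i))
    simp only [Stmt1Aux.mk₃_apply] at hT
    rw [hT]
    -- now expand comul ((r2 i).right j) and collapse
    have step2 : ∀ i, ∑ j ∈ (ℛ K (r.right i)).index,
        (aS ((ℛ K (r.right i)).left j) ⊗ₜ[K] aS (r.left i)) *
          Coalgebra.comul (R := K) ((ℛ K (r.right i)).right j)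
        = (1 : H) ⊗ₜ[K] (aS (r.left i) * r.right i) := by
      intro i
      set c := r.right i with hc
      set rc := ℛ K c with hrc
      -- second coassociativity transport, at the element c
      have hU := Stmt1Aux.tri_coassoc (K := K)
        (Stmt1Aux.mk₃ (fun x y z => (aS x * y) ⊗ₜ[K] (aS (r.left i) * z))
          (by intros; simp only [map_add, map_smul, TensorProduct.add_tmul, TensorProduct.tmul_add, TensorProduct.smul_tmul, TensorProduct.tmul_smul, add_mul, mul_add, smul_mul_assoc, mul_smul_comm]) (by intros; simp only [map_add, map_smul, TensorProduct.add_tmul, TensorProduct.tmul_add, TensorProduct.smul_tmul, TensorProduct.tmul_smul, add_mul, mul_add, smul_mul_assoc, mul_smul_comm]) (by intros; simp only [map_add, map_smul, TensorProduct.add_tmul, TensorProduct.tmul_add, TensorProduct.smul_tmul, TensorProduct.tmul_smul, add_mul, mul_add, smul_mul_assoc, mul_smul_comm]) (by intros; simp only [map_add, map_smul, TensorProduct.add_tmul, TensorProduct.tmul_add, TensorProduct.smul_tmul, TensorProduct.tmul_smul, add_mul, mul_add, smul_mul_assoc, mul_smul_comm]) (by intros; simp only [map_add, map_smul, TensorProduct.add_tmul,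 TensorProduct.tmul_add, TensorProduct.smul_tmul, TensorProduct.tmul_smul, add_mul, mul_add, smul_mul_assoc, mul_smul_comm]) (by intros; simp only [map_add, map_smul, TensorProduct.add_tmul, TensorProduct.tmul_add, TensorProduct.smul_tmul, TensorProduct.tmul_smul, add_mul, mul_add, smul_mul_assoc, mul_smul_comm]))
        rc (fun j => ℛ K (rc.left j)) (fun j => ℛ K (rc.right j))
      simp only [Stmt1Aux.mk₃_apply] at hU
      have expand : ∀ j, (aS (rc.left j) ⊗ₜ[K] aS (r.left i)) *
            Coalgebra.comul (R := K) (rc.right j)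
          = ∑ m ∈ (ℛ K (rc.right j)).index,
              (aS (rc.left j) * (ℛ K (rc.right j)).left m) ⊗ₜ[K]
                (aS (r.left i) * (ℛ K (rc.right j)).right m) := by
        intro j
        rw [← (ℛ K (rc.right j)).eq, Finset.mul_sum]
        refine Finset.sum_congr rfl fun m _ => ?_
        rw [Algebra.TensorProduct.tmul_mul_tmul]
      refine (Finset.sum_congr rfl (fun j _ => expand j)).trans ?_
      rw [← hU]
      have collapse : ∀ j, ∑ m ∈ (ℛ K (rc.left j)).index,
          (aS ((ℛ K (rc.left j)).left m) * (ℛ K (rc.left j)).right m) ⊗ₜ[K]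
            (aS (r.left i) * rc.right j)
          = (1 : H) ⊗ₜ[K] (Coalgebra.counit (R := K) (rc.left j) •
              (aS (r.left i) * rc.right j)) := by
        intro j
        rw [← TensorProduct.sum_tmul]
        rw [HopfAlgebra.sum_antipode_mul_eq_smul (R := K) (repr := ℛ K (rc.left j))]
        rw [TensorProduct.smul_tmul]
      refine (Finset.sum_congr rfl (fun j _ => collapse j)).trans ?_
      rw [← TensorProduct.tmul_sum]
      congr 1
      have : ∀ j, Coalgebra.counit (R := K) (rc.left j) • (aS (r.left i) * rc.right j)
          = aS (r.left i) * (Coalgebra.counit (R := K) (rc.left j) • rc.right j) := by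
        intro j; rw [mul_smul_comm]
      refine (Finset.sum_congr rfl (fun j _ => this j)).trans ?_
      rw [← Finset.mul_sum, sum_counit_smul_right' rc]
    refine (Finset.sum_congr rfl (fun i _ => step2 i)).trans ?_
    rw [← TensorProduct.tmul_sum]
    rw [HopfAlgebra.sum_antipode_mul_eq_algebraMap_counit (R := K) (repr := r)]
    rw [cunit]
    simp [Algebra.algebraMap_eq_smul_one, Algebra.TensorProduct.one_def,
      TensorProduct.tmul_smul, TensorProduct.smul_tmul]
  have h2 : Stmt1Aux.conv (K := K) (Coalgebra.comul (R := K) (A := H))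
      ((Coalgebra.comul (R := K) (A := H)) ∘ₗ (aS : H →ₗ[K] H))
      = Stmt1Aux.cunit (K := K) := by
    have hmapdecomp : TensorProduct.map (Coalgebra.comul (R := K) (A := H))
        ((Coalgebra.comul (R := K) (A := H)) ∘ₗ (aS : H →ₗ[K] H))
        = (TensorProduct.map (Coalgebra.comul (R := K) (A := H))
            (Coalgebra.comul (R := K) (A := H))) ∘ₗ
          (LinearMap.lTensor H (aS : H →ₗ[K] H)) := by
      ext x y
      simp
    have hmulmul : (LinearMap.mul' K (H ⊗[K] H)) ∘ₗ
        TensorProduct.map (Coalgebra.comul (R := K) (A := H))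
          (Coalgebra.comul (R := K) (A := H))
        = (Coalgebra.comul (R := K) (A := H)) ∘ₗ LinearMap.mul' K H := by
      ext x y
      simp [LinearMap.mul'_apply, Bialgebra.comul_mul]
    apply LinearMap.ext
    intro x
    rw [conv]
    simp only [LinearMap.comp_apply, hmapdecomp]
    rw [← LinearMap.comp_apply (LinearMap.mul' K (H ⊗[K] H)),
      LinearMap.congr_fun hmulmul]
    simp only [LinearMap.comp_apply]
    rw [HopfAlgebra.mul_antipode_lTensor_comul_apply (R := K)]
    rw [Bialgebra.comul_algebraMap, cunit]
    simp
  exact (conv_inv_unique h1 h2).symm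

end Stmt1AuxB

namespace Stmt1Cat
open Coalgebra Stmt1Aux Stmt1AuxB

variable {K : Type} [Field K] {H : Type} [Ring H] [HopfAlgebra K H]

def oneRepr : Coalgebra.Repr K (1 : H) Unit where
  index := ({Unit.unit} : Finset Unit)
  left := fun _ => (1 : H)
  right := fun _ => (1 : H)
  eq := by simp [Algebra.TensorProduct.one_def]

def antipodeRepr {h : H} {ι : Type*} (r : Coalgebra.Repr K h ι) :
    Coalgebra.Repr K (HopfAlgebra.antipode (R := K) h) ι where
  index := r.index
  left := fun i => HopfAlgebra.antipode (R := K) (r.right i)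
  right := fun i => HopfAlgebra.antipode (R := K) (r.left i)
  eq := by
    have hca := LinearMap.congr_fun (comul_antipode (K := K) (H := H)) h
    simp only [LinearMap.comp_apply, LinearEquiv.coe_coe] at hca
    rw [hca, ← r.eq, map_sum, map_sum]
    simp

section SinvLemmas

variable (Sinv : H →ₗ[K] H)

lemma Sinv_one (hSinv₂ : ∀ h : H, Sinv (HopfAlgebra.antipode (R := K) h) = h) :
    Sinv (1 : H) = 1 :=
  (congrArg Sinv (antipode_one (K := K) (H := H))).symm.trans (hSinv₂ 1)

lemma counit_Sinv (hSinv₁ : ∀ h : H, HopfAlgebra.antipode (R := K) (Sinv h) = h) (a : H) :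
    Coalgebra.counit (R := K) (Sinv a) = Coalgebra.counit (R := K) a := by
  conv_rhs => rw [← hSinv₁ a]
  rw [counit_antipode]

lemma Sinv_mul (hSinv₁ : ∀ h : H, HopfAlgebra.antipode (R := K) (Sinv h) = h)
    (hSinv₂ : ∀ h : H, Sinv (HopfAlgebra.antipode (R := K) h) = h) (a b : H) : Sinv (a * b) = Sinv b * Sinv a := by
  have h : a * b = HopfAlgebra.antipode (R := K) (Sinv b * Sinv a) := by
    rw [antipode_mul, hSinv₁, hSinv₁]
  rw [h, hSinv₂]

lemma comul_Sinv (hSinv₁ : ∀ h : H, HopfAlgebra.antipode (R := K) (Sinv h) = h)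
    (hSinv₂ : ∀ h : H, Sinv (HopfAlgebra.antipode (R := K) h) = h) (a : H) :
    Coalgebra.comul (R := K) (Sinv a)
      = TensorProduct.map Sinv Sinv
          ((TensorProduct.comm K H H) (Coalgebra.comul (R := K) a)) := by
  have hca := LinearMap.congr_fun (comul_antipode (K := K) (H := H)) (Sinv a)
  simp only [LinearMap.comp_apply, LinearEquiv.coe_coe, hSinv₁] at hca
  rw [hca]
  have hcommmap : ∀ t : H ⊗[K] H,
      (TensorProduct.comm K H H) (TensorProduct.map
        (HopfAlgebra.antipode (R := K) (A := H)) (HopfAlgebra.antipode (R := K) (A := H)) t)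
      = TensorProduct.map (HopfAlgebra.antipode (R := K) (A := H))
          (HopfAlgebra.antipode (R := K) (A := H)) ((TensorProduct.comm K H H) t) := by
    intro t
    induction t using TensorProduct.induction_on with
    | zero => simp
    | tmul x y => simp
    | add x y hx hy => simp [hx, hy]
  rw [hcommmap]
  have hcc : ∀ t : H ⊗[K] H,
      (TensorProduct.comm K H H) ((TensorProduct.comm K H H) t) = t := by
    intro t
    induction t using TensorProduct.induction_on with
    | zero => simp
    | tmul x y => simp
    | add x y hx hy => simp [hx, hy]
  rw [hcc]
  have hSinvS : ∀ t : H ⊗[K] H, TensorProduct.map Sinv Sinv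
      (TensorProduct.map (HopfAlgebra.antipode (R := K) (A := H))
        (HopfAlgebra.antipode (R := K) (A := H)) t) = t := by
    intro t
    induction t using TensorProduct.induction_on with
    | zero => simp
    | tmul x y => simp [hSinv₂]
    | add x y hx hy => simp [hx, hy]
  rw [hSinvS]

def SinvRepr (hSinv₁ : ∀ h : H, HopfAlgebra.antipode (R := K) (Sinv h) = h)
    (hSinv₂ : ∀ h : H, Sinv (HopfAlgebra.antipode (R := K) h) = h) {h : H} {ι : Type*} (r : Coalgebra.Repr K h ι) : Coalgebra.Repr K (Sinv h) ι where
  index := r.index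
  left := fun i => Sinv (r.right i)
  right := fun i => Sinv (r.left i)
  eq := by
    rw [comul_Sinv Sinv hSinv₁ hSinv₂ h, ← r.eq, map_sum, map_sum]
    simp

end SinvLemmas

end Stmt1Cat

namespace Stmt1Cat
open Coalgebra Stmt1Aux Stmt1AuxB

section CatLemmas
variable {K : Type} [Field K] {H : Type} [Ring H] [HopfAlgebra K H]
variable {C : LeftHCat K H}

lemma act_mul_apply (X Y : C.Obj) (a b : H) (f : C.Hom X Y) :
    C.act X Y (a * b) f = C.act X Y a (C.act X Y b f) := by
  rw [C.act_mul]; rfl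

lemma act_one_apply (X Y : C.Obj) (f : C.Hom X Y) : C.act X Y 1 f = f := by
  rw [C.act_one]; rfl

lemma smash_comp_tmul_repr (S : SmashCat C) {X Y Z : C.Obj} (u : C.Hom X Y) (h' : H)
    (v : C.Hom Y Z) {h : H} {ι : Type*} (r : Coalgebra.Repr K h ι) :
    S.comp (u ⊗ₜ[K] h') (v ⊗ₜ[K] h)
      = ∑ i ∈ r.index, (C.comp (C.act X Y (r.left i) u) v) ⊗ₜ[K] (r.right i * h') := by
  rw [S.comp_tmul, ← r.eq, map_sum]
  simp

lemma smash_comp_tmul_one (S : SmashCat C) {X Y Z : C.Obj} (u : C.Hom X Y) (h' : H)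
    (v : C.Hom Y Z) :
    S.comp (u ⊗ₜ[K] h') (v ⊗ₜ[K] (1 : H)) = (C.comp u v) ⊗ₜ[K] h' := by
  rw [smash_comp_tmul_repr S u h' v (oneRepr (K := K) (H := H))]
  simp [oneRepr, act_one_apply]

lemma smash_comp_idm (S : SmashCat C) (X : C.Obj) (h h' : H) :
    S.comp ((C.idm X) ⊗ₜ[K] h') ((C.idm X) ⊗ₜ[K] h) = (C.idm X) ⊗ₜ[K] (h * h') := by
  rw [smash_comp_tmul_repr S _ h' _ (ℛ K h)]
  have step : ∀ i, (C.comp (C.act X X ((ℛ K h).left i) (C.idm X)) (C.idm X)) ⊗ₜ[K]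
        ((ℛ K h).right i * h')
      = (C.idm X) ⊗ₜ[K] ((Coalgebra.counit (R := K) ((ℛ K h).left i) • (ℛ K h).right i) * h') := by
    intro i
    rw [C.act_idm]
    rw [map_smul, LinearMap.smul_apply, C.id_comp]
    rw [TensorProduct.smul_tmul, smul_mul_assoc]
  refine (Finset.sum_congr rfl fun i _ => step i).trans ?_
  rw [← TensorProduct.tmul_sum, ← Finset.sum_mul, sum_counit_smul_right (ℛ K h)]

lemma smash_comp_one_id (S : SmashCat C) {X Y : C.Obj} (u : C.Hom X Y) {c : H} {ι : Type*}
    (rc : Coalgebra.Repr K c ι) :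
    S.comp (u ⊗ₜ[K] (1 : H)) ((C.idm Y) ⊗ₜ[K] c)
      = ∑ i ∈ rc.index, (C.act X Y (rc.left i) u) ⊗ₜ[K] (rc.right i) := by
  rw [smash_comp_tmul_repr S u 1 (C.idm Y) rc]
  refine Finset.sum_congr rfl fun i _ => ?_
  rw [C.comp_id, mul_one]

variable {ob : C.Obj → Type} [∀ X, AddCommGroup (ob X)] [∀ X, Module K (ob X)]
  {map : ∀ X Y : C.Obj, C.Hom X Y →ₗ[K] (ob Y →ₗ[K] ob X)}
  {act : ∀ X, H →ₗ[K] ob X →ₗ[K] ob X}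

lemma eq_repr (hD : IsEqModData C ob map act) {X Y : C.Obj} {h : H} {ι : Type*}
    (r : Coalgebra.Repr K h ι) (f : C.Hom X Y) (m : ob Y) :
    act X h (map X Y f m)
      = ∑ i ∈ r.index, map X Y (C.act X Y (r.right i) f) (act Y (r.left i) m) := by
  rw [hD.2.2.2 X Y h f m, lift_comul_repr _ r]
  refine Finset.sum_congr rfl fun i _ => ?_
  simp [LinearMap.flip_apply]

lemma ie_repr (hD : IsEqModData C ob map act) {X Y : C.Obj} (u : C.Hom X Y) {h : H} {ι : Type*}
    (r : Coalgebra.Repr K h ι) (n : ob Y) :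
    map X Y u (act Y h n)
      = ∑ i ∈ r.index, act X (r.left i)
          (map X Y (C.act X Y (HopfAlgebra.antipode (R := K) (r.right i)) u) n) := by
  symm
  have step : ∀ i, act X (r.left i)
        (map X Y (C.act X Y (HopfAlgebra.antipode (R := K) (r.right i)) u) n)
      = ∑ j ∈ (ℛ K (r.left i)).index,
          map X Y (C.act X Y ((ℛ K (r.left i)).right j *
            HopfAlgebra.antipode (R := K) (r.right i)) u)
            (act Y ((ℛ K (r.left i)).left j) n) := by
    intro i
    rw [eq_repr hD (ℛ K (r.left i)) _ n]
    refine Finset.sum_congr rfl fun j _ => ?_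
    rw [act_mul_apply]
  refine (Finset.sum_congr rfl fun i _ => step i).trans ?_
  have hT := tri_coassoc (K := K)
    (mk₃ (fun x y z => map X Y (C.act X Y (y * HopfAlgebra.antipode (R := K) z) u)
        (act Y x n))
      (by intros; simp)
      (by intros; simp)
      (by intros; simp [add_mul])
      (by intros; simp [smul_mul_assoc])
      (by intros; simp [mul_add])
      (by intros; simp [mul_smul_comm]))
    r (fun i => ℛ K (r.left i)) (fun i => ℛ K (r.right i))
  simp only [mk₃_apply] at hT
  rw [hT]
  have step2 : ∀ i, ∑ k ∈ (ℛ K (r.right i)).index,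
        map X Y (C.act X Y ((ℛ K (r.right i)).left k *
          HopfAlgebra.antipode (R := K) ((ℛ K (r.right i)).right k)) u)
          (act Y (r.left i) n)
      = Coalgebra.counit (R := K) (r.right i) • map X Y u (act Y (r.left i) n) := by
    intro i
    have e : ∑ k ∈ (ℛ K (r.right i)).index,
        C.act X Y ((ℛ K (r.right i)).left k *
          HopfAlgebra.antipode (R := K) ((ℛ K (r.right i)).right k)) u
        = Coalgebra.counit (R := K) (r.right i) • u := by
      rw [← LinearMap.sum_apply, ← map_sum,
        HopfAlgebra.sum_mul_antipode_eq_smul (R := K) (repr := ℛ K (r.right i))]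
      rw [map_smul, LinearMap.smul_apply, act_one_apply]
    calc ∑ k ∈ (ℛ K (r.right i)).index,
          map X Y (C.act X Y ((ℛ K (r.right i)).left k *
            HopfAlgebra.antipode (R := K) ((ℛ K (r.right i)).right k)) u)
            (act Y (r.left i) n)
        = map X Y (∑ k ∈ (ℛ K (r.right i)).index,
            C.act X Y ((ℛ K (r.right i)).left k *
              HopfAlgebra.antipode (R := K) ((ℛ K (r.right i)).right k)) u)
            (act Y (r.left i) n) := by
          rw [← LinearMap.sum_apply, ← map_sum]
      _ = _ := by rw [e, map_smul, LinearMap.smul_apply]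
  refine (Finset.sum_congr rfl fun i _ => step2 i).trans ?_
  have step3 : ∀ i, Coalgebra.counit (R := K) (r.right i) • map X Y u (act Y (r.left i) n)
      = map X Y u (act Y (Coalgebra.counit (R := K) (r.right i) • r.left i) n) := by
    intro i
    simp only [map_smul, LinearMap.smul_apply]
  refine (Finset.sum_congr rfl fun i _ => step3 i).trans ?_
  have : ∑ i ∈ r.index, map X Y u (act Y (Coalgebra.counit (R := K) (r.right i) • r.left i) n)
      = map X Y u (act Y (∑ i ∈ r.index,
          Coalgebra.counit (R := K) (r.right i) • r.left i) n) := by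
    rw [map_sum, LinearMap.sum_apply, map_sum]
  rw [this, sum_counit_smul_left r]

lemma ie_Sinv_repr (hD : IsEqModData C ob map act) (Sinv : H →ₗ[K] H)
    (hSinv₁ : ∀ h : H, HopfAlgebra.antipode (R := K) (Sinv h) = h)
    (hSinv₂ : ∀ h : H, Sinv (HopfAlgebra.antipode (R := K) h) = h)
    {X Y : C.Obj} (u : C.Hom X Y) {h : H} {ι : Type*} (r : Coalgebra.Repr K h ι) (m : ob Y) :
    map X Y u (act Y (Sinv h) m)
      = ∑ i ∈ r.index, act X (Sinv (r.right i)) (map X Y (C.act X Y (r.left i) u) m) := by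
  rw [ie_repr hD u (SinvRepr Sinv hSinv₁ hSinv₂ r) m]
  refine Finset.sum_congr rfl fun i _ => ?_
  have h1 : (SinvRepr Sinv hSinv₁ hSinv₂ r).left i = Sinv (r.right i) := rfl
  have h2 : (SinvRepr Sinv hSinv₁ hSinv₂ r).right i = Sinv (r.left i) := rfl
  rw [h1, h2, hSinv₁]

end CatLemmas
end Stmt1Cat

namespace Stmt1Cat
open Coalgebra Stmt1Aux Stmt1AuxB

section Part1Def
variable {K : Type} [Field K] {H : Type} [Ring H] [HopfAlgebra K H]
variable (C : LeftHCat K H) (Sinv : H →ₗ[K] H)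
  (ob : C.Obj → Type) [∀ X, AddCommGroup (ob X)] [∀ X, Module K (ob X)]
  (map : ∀ X Y : C.Obj, C.Hom X Y →ₗ[K] (ob Y →ₗ[K] ob X))
  (act : ∀ X, H →ₗ[K] ob X →ₗ[K] ob X)

/-- The candidate `C#H`-module structure extending an equivariant structure. -/
def part1MapS : ∀ X Y : C.Obj, (C.Hom X Y ⊗[K] H) →ₗ[K] (ob Y →ₗ[K] ob X) :=
  fun X Y => TensorProduct.lift (LinearMap.mk₂ K
    (fun f h => (act X (Sinv h)) ∘ₗ (map X Y f))
    (fun f f' h => by ext m; simp)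
    (fun c f h => by ext m; simp)
    (fun f h h' => by ext m; simp)
    (fun c f h => by ext m; simp))

@[simp] lemma part1MapS_tmul (X Y : C.Obj) (f : C.Hom X Y) (h : H) (m : ob Y) :
    part1MapS C Sinv ob map act X Y (f ⊗ₜ[K] h) m = act X (Sinv h) (map X Y f m) := by
  simp [part1MapS]

end Part1Def
end Stmt1Cat

open Stmt1Cat Stmt1Aux Stmt1AuxB Coalgebra in
theorem statement1' {K : Type} [Field K] {H : Type} [Ring H] [HopfAlgebra K H]
    (C : LeftHCat K H) (S : SmashCat C)
    (Sinv : H →ₗ[K] H)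
    (hSinv₁ : ∀ h : H, HopfAlgebra.antipode (R := K) (Sinv h) = h)
    (hSinv₂ : ∀ h : H, Sinv (HopfAlgebra.antipode (R := K) h) = h)
    (ob : C.Obj → Type) [∀ X, AddCommGroup (ob X)] [∀ X, Module K (ob X)] :
    (∀ (map : ∀ X Y : C.Obj, C.Hom X Y →ₗ[K] (ob Y →ₗ[K] ob X))
       (act : ∀ X, H →ₗ[K] ob X →ₗ[K] ob X),
      IsEqModData C ob map act →
        ∃! mapS : ∀ X Y : C.Obj, (C.Hom X Y ⊗[K] H) →ₗ[K] (ob Y →ₗ[K] ob X),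
          IsRModMap K S.lin ob mapS ∧
          (∀ (X Y : C.Obj) (f : C.Hom X Y) (h : H) (m : ob Y),
            mapS X Y (f ⊗ₜ[K] h) m = act X (Sinv h) (map X Y f m)) ∧
          (∀ (X Y : C.Obj) (f : C.Hom X Y) (m : ob Y),
            mapS X Y (f ⊗ₜ[K] (1 : H)) m = map X Y f m) ∧
          (∀ (X : C.Obj) (h : H) (m : ob X),
            mapS X X ((C.idm X) ⊗ₜ[K] (HopfAlgebra.antipode (R := K) h)) m
              = act X h m))
    ∧
    (∀ mapS : ∀ X Y : C.Obj, (C.Hom X Y ⊗[K] H) →ₗ[K] (ob Y →ₗ[K] ob X),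
      IsRModMap K S.lin ob mapS →
        ∃! p : (∀ X Y : C.Obj, C.Hom X Y →ₗ[K] (ob Y →ₗ[K] ob X)) ×
               (∀ X, H →ₗ[K] ob X →ₗ[K] ob X),
          IsEqModData C ob p.1 p.2 ∧
          (∀ (X Y : C.Obj) (f : C.Hom X Y) (m : ob Y),
            p.1 X Y f m = mapS X Y (f ⊗ₜ[K] (1 : H)) m) ∧
          (∀ (X : C.Obj) (h : H) (m : ob X),
            p.2 X h m = mapS X X ((C.idm X) ⊗ₜ[K] (HopfAlgebra.antipode (R := K) h)) m) ∧
          (∀ (X Y : C.Obj) (f : C.Hom X Y) (h : H) (m : ob Y),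
            mapS X Y (f ⊗ₜ[K] h) m = p.2 X (Sinv h) (p.1 X Y f m))) := by
  constructor
  · -- Part 1
    intro map act hD
    refine ⟨part1MapS C Sinv ob map act, ⟨⟨?_, ?_⟩, ?_, ?_, ?_⟩, ?_⟩
    · -- map_id
      intro X
      show part1MapS C Sinv ob map act X X ((C.idm X) ⊗ₜ[K] (1 : H)) = LinearMap.id
      apply LinearMap.ext
      intro m
      rw [part1MapS_tmul, Sinv_one Sinv hSinv₂, hD.1.1 X, hD.2.1 X]
      rfl
    · -- map_comp
      intro X Y Z ξ η
      show part1MapS C Sinv ob map act X Z (S.comp ξ η)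
        = part1MapS C Sinv ob map act X Y ξ ∘ₗ part1MapS C Sinv ob map act Y Z η
      have hpure : ∀ (u : C.Hom X Y) (h' : H) (v : C.Hom Y Z) (h : H),
          part1MapS C Sinv ob map act X Z (S.comp (u ⊗ₜ[K] h') (v ⊗ₜ[K] h))
            = part1MapS C Sinv ob map act X Y (u ⊗ₜ[K] h') ∘ₗ
              part1MapS C Sinv ob map act Y Z (v ⊗ₜ[K] h) := by
        intro u h' v h
        rw [smash_comp_tmul_repr S u h' v (ℛ K h), map_sum]
        apply LinearMap.ext
        intro m
        simp only [LinearMap.sum_apply, LinearMap.comp_apply]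
        have lhs : ∀ i, part1MapS C Sinv ob map act X Z
              ((C.comp (C.act X Y ((ℛ K h).left i) u) v) ⊗ₜ[K] ((ℛ K h).right i * h')) m
            = act X (Sinv h') (act X (Sinv ((ℛ K h).right i))
                (map X Y (C.act X Y ((ℛ K h).left i) u) (map Y Z v m))) := by
          intro i
          rw [part1MapS_tmul, Sinv_mul Sinv hSinv₁ hSinv₂, hD.1.2 X Y Z _ v,
            hD.2.2.1 X (Sinv h') (Sinv ((ℛ K h).right i))]
          rfl
        refine (Finset.sum_congr rfl fun i _ => lhs i).trans ?_
        rw [part1MapS_tmul, part1MapS_tmul]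
        rw [ie_Sinv_repr hD Sinv hSinv₁ hSinv₂ u (ℛ K h) (map Y Z v m)]
        rw [map_sum]
      induction ξ using TensorProduct.induction_on with
      | zero => simp
      | tmul u h' =>
          induction η using TensorProduct.induction_on with
          | zero => simp
          | tmul v h => exact hpure u h' v h
          | add x y hx hy => simp only [map_add, LinearMap.comp_add, hx, hy]
      | add x y hx hy =>
          simp only [map_add, LinearMap.add_apply, LinearMap.add_comp, hx, hy]
    · -- cond2
      intro X Y f h m
      rw [part1MapS_tmul]
    · -- cond3
      intro X Y f m
      rw [part1MapS_tmul, Sinv_one Sinv hSinv₂, hD.2.1 X]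
      rfl
    · -- cond4
      intro X h m
      rw [part1MapS_tmul, hSinv₂ h, hD.1.1 X]
      rfl
    · -- uniqueness
      intro y hy
      funext X Y
      apply TensorProduct.ext'
      intro f h
      apply LinearMap.ext
      intro m
      rw [hy.2.1 X Y f h m, part1MapS_tmul]
  · -- Part 2
    intro mapS hS
    have hS1 : ∀ X : C.Obj, mapS X X ((C.idm X) ⊗ₜ[K] (1 : H)) = LinearMap.id := hS.1
    have hS2 : ∀ (X Y Z : C.Obj) (ξ : C.Hom X Y ⊗[K] H) (η : C.Hom Y Z ⊗[K] H),
        mapS X Z (S.comp ξ η) = mapS X Y ξ ∘ₗ mapS Y Z η := hS.2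
    refine ⟨⟨fun X Y => (mapS X Y) ∘ₗ ((TensorProduct.mk K (C.Hom X Y) H).flip 1),
            fun X => (mapS X X) ∘ₗ (TensorProduct.mk K (C.Hom X X) H (C.idm X)) ∘ₗ
              (HopfAlgebra.antipode (R := K) (A := H))⟩,
      ⟨⟨⟨?_, ?_⟩, ?_, ?_, ?_⟩, ?_, ?_, ?_⟩, ?_⟩
    · -- map_id
      intro X
      exact hS1 X
    · -- map_comp
      intro X Y Z f g
      show mapS X Z ((C.comp f g) ⊗ₜ[K] (1 : H)) = _
      rw [← S.comp_tmul_one f g]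
      exact hS2 X Y Z _ _
    · -- act_one
      intro X
      show mapS X X ((C.idm X) ⊗ₜ[K] (HopfAlgebra.antipode (R := K) (1 : H)))
        = LinearMap.id
      rw [antipode_one (K := K) (H := H)]
      exact hS1 X
    · -- act_mul
      intro X a b
      show mapS X X ((C.idm X) ⊗ₜ[K] (HopfAlgebra.antipode (R := K) (a * b))) = _
      rw [antipode_mul (K := K) a b, ← smash_comp_idm S X
        (HopfAlgebra.antipode (R := K) b) (HopfAlgebra.antipode (R := K) a)]
      exact hS2 X X X _ _
    · -- equivar
      intro X Y h f m
      rw [lift_comul_repr _ (ℛ K h)]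
      simp only [LinearMap.comp_apply, LinearMap.flip_apply]
      have hL : mapS X X ((C.idm X) ⊗ₜ[K] (HopfAlgebra.antipode (R := K) h))
            (mapS X Y (f ⊗ₜ[K] (1 : H)) m)
          = mapS X Y (f ⊗ₜ[K] (HopfAlgebra.antipode (R := K) h)) m := by
        have hc := LinearMap.congr_fun (hS2 X X Y
          ((C.idm X) ⊗ₜ[K] (HopfAlgebra.antipode (R := K) h)) (f ⊗ₜ[K] (1 : H))) m
        simp only [LinearMap.comp_apply] at hc
        rw [← hc, smash_comp_tmul_one S (C.idm X) _ f, C.id_comp]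
      show mapS X X ((C.idm X) ⊗ₜ[K] (HopfAlgebra.antipode (R := K) h))
          (mapS X Y (f ⊗ₜ[K] (1 : H)) m) = _
      rw [hL]
      have hterm : ∀ i, mapS X Y ((C.act X Y ((ℛ K h).right i) f) ⊗ₜ[K] (1 : H))
            (mapS Y Y ((C.idm Y) ⊗ₜ[K]
              (HopfAlgebra.antipode (R := K) ((ℛ K h).left i))) m)
          = ∑ j ∈ (ℛ K ((ℛ K h).left i)).index,
              mapS X Y ((C.act X Y
                (HopfAlgebra.antipode (R := K) ((ℛ K ((ℛ K h).left i)).right j) *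
                  (ℛ K h).right i) f)
                ⊗ₜ[K] (HopfAlgebra.antipode (R := K) ((ℛ K ((ℛ K h).left i)).left j))) m := by
        intro i
        have hc := LinearMap.congr_fun (hS2 X Y Y
          ((C.act X Y ((ℛ K h).right i) f) ⊗ₜ[K] (1 : H))
          ((C.idm Y) ⊗ₜ[K] (HopfAlgebra.antipode (R := K) ((ℛ K h).left i)))) m
        simp only [LinearMap.comp_apply] at hc
        rw [← hc, smash_comp_one_id S _ (antipodeRepr (ℛ K ((ℛ K h).left i))),
          map_sum, LinearMap.sum_apply]
        refine Finset.sum_congr rfl fun j _ => ?_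
        rw [show (antipodeRepr (ℛ K ((ℛ K h).left i))).left j
            = HopfAlgebra.antipode (R := K) ((ℛ K ((ℛ K h).left i)).right j) from rfl,
          show (antipodeRepr (ℛ K ((ℛ K h).left i))).right j
            = HopfAlgebra.antipode (R := K) ((ℛ K ((ℛ K h).left i)).left j) from rfl,
          ← act_mul_apply]
      refine Eq.trans ?_ (Finset.sum_congr rfl fun i _ => (hterm i).symm)
      have hT := tri_coassoc (K := K)
        (mk₃ (fun x y z => mapS X Y ((C.act X Y
            (HopfAlgebra.antipode (R := K) y * z) f)
            ⊗ₜ[K] (HopfAlgebra.antipode (R := K) x)) m)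
          (by intros; simp only [map_add, map_smul, TensorProduct.add_tmul, TensorProduct.tmul_add, TensorProduct.smul_tmul, TensorProduct.tmul_smul, add_mul, mul_add, smul_mul_assoc, mul_smul_comm, LinearMap.add_apply, LinearMap.smul_apply])
          (by intros; simp only [map_add, map_smul, TensorProduct.add_tmul, TensorProduct.tmul_add, TensorProduct.smul_tmul, TensorProduct.tmul_smul, add_mul, mul_add, smul_mul_assoc, mul_smul_comm, LinearMap.add_apply, LinearMap.smul_apply])
          (by intros; simp only [map_add, map_smul, TensorProduct.add_tmul, TensorProduct.tmul_add, TensorProduct.smul_tmul, TensorProduct.tmul_smul, add_mul, mul_add, smul_mul_assoc, mul_smul_comm, LinearMap.add_apply, LinearMap.smul_apply])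
          (by intros; simp only [map_add, map_smul, TensorProduct.add_tmul, TensorProduct.tmul_add, TensorProduct.smul_tmul, TensorProduct.tmul_smul, add_mul, mul_add, smul_mul_assoc, mul_smul_comm, LinearMap.add_apply, LinearMap.smul_apply])
          (by intros; simp only [map_add, map_smul, TensorProduct.add_tmul, TensorProduct.tmul_add, TensorProduct.smul_tmul, TensorProduct.tmul_smul, add_mul, mul_add, smul_mul_assoc, mul_smul_comm, LinearMap.add_apply, LinearMap.smul_apply])
          (by intros; simp only [map_add, map_smul, TensorProduct.add_tmul, TensorProduct.tmul_add, TensorProduct.smul_tmul, TensorProduct.tmul_smul, add_mul, mul_add, smul_mul_assoc, mul_smul_comm, LinearMap.add_apply, LinearMap.smul_apply]))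
        (ℛ K h) (fun i => ℛ K ((ℛ K h).left i)) (fun i => ℛ K ((ℛ K h).right i))
      simp only [mk₃_apply] at hT
      rw [hT]
      have step2 : ∀ i, ∑ k ∈ (ℛ K ((ℛ K h).right i)).index,
            mapS X Y ((C.act X Y
              (HopfAlgebra.antipode (R := K) ((ℛ K ((ℛ K h).right i)).left k) *
                (ℛ K ((ℛ K h).right i)).right k) f)
              ⊗ₜ[K] (HopfAlgebra.antipode (R := K) ((ℛ K h).left i))) m
          = Coalgebra.counit (R := K) ((ℛ K h).right i) •
              mapS X Y (f ⊗ₜ[K] (HopfAlgebra.antipode (R := K) ((ℛ K h).left i))) m := by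
        intro i
        have e : ∑ k ∈ (ℛ K ((ℛ K h).right i)).index,
            C.act X Y (HopfAlgebra.antipode (R := K) ((ℛ K ((ℛ K h).right i)).left k) *
              (ℛ K ((ℛ K h).right i)).right k) f
            = Coalgebra.counit (R := K) ((ℛ K h).right i) • f := by
          rw [← LinearMap.sum_apply, ← map_sum,
            HopfAlgebra.sum_antipode_mul_eq_smul (R := K) (repr := ℛ K ((ℛ K h).right i)),
            map_smul, LinearMap.smul_apply, act_one_apply]
        rw [← LinearMap.sum_apply, ← map_sum, ← TensorProduct.sum_tmul, e,
          TensorProduct.smul_tmul, TensorProduct.tmul_smul, map_smul, LinearMap.smul_apply]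
      refine Eq.trans ?_ (Finset.sum_congr rfl fun i _ => (step2 i).symm)
      have step3 : ∀ i, Coalgebra.counit (R := K) ((ℛ K h).right i) •
            mapS X Y (f ⊗ₜ[K] (HopfAlgebra.antipode (R := K) ((ℛ K h).left i))) m
          = mapS X Y (f ⊗ₜ[K] (HopfAlgebra.antipode (R := K)
              (Coalgebra.counit (R := K) ((ℛ K h).right i) • (ℛ K h).left i))) m := by
        intro i
        simp only [map_smul, TensorProduct.tmul_smul, LinearMap.smul_apply]
      refine Eq.trans ?_ (Finset.sum_congr rfl fun i _ => (step3 i).symm)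
      rw [← LinearMap.sum_apply, ← map_sum, ← TensorProduct.tmul_sum, ← map_sum,
        sum_counit_smul_left (ℛ K h)]
    · -- cond2
      intro X Y f m
      rfl
    · -- cond3
      intro X h m
      rfl
    · -- cond4
      intro X Y f h m
      have hc := LinearMap.congr_fun (hS2 X X Y
        ((C.idm X) ⊗ₜ[K] (HopfAlgebra.antipode (R := K) (Sinv h))) (f ⊗ₜ[K] (1 : H))) m
      simp only [LinearMap.comp_apply] at hc
      show mapS X Y (f ⊗ₜ[K] h) m
        = mapS X X ((C.idm X) ⊗ₜ[K] (HopfAlgebra.antipode (R := K) (Sinv h)))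
            (mapS X Y (f ⊗ₜ[K] (1 : H)) m)
      rw [← hc, smash_comp_tmul_one S (C.idm X) _ f, C.id_comp, hSinv₁]
    · -- uniqueness
      intro q hq
      obtain ⟨q1, q2⟩ := q
      obtain ⟨hqd, hq2, hq3, hq4⟩ := hq
      simp only [Prod.mk.injEq]
      constructor
      · funext X Y
        apply LinearMap.ext
        intro f
        apply LinearMap.ext
        intro m
        exact hq2 X Y f m
      · funext X
        apply LinearMap.ext
        intro hh
        apply LinearMap.ext
        intro m
        exact hq3 X hh m

/-- Let `C` be a left `H`-category (`H` having bijective antipode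
with inverse `Sinv`) and let `C#H` be its smash product category.  On any family of
vector spaces `ob` indexed by the objects, left `H`-equivariant right `C`-module
structures correspond one-to-one to right `C#H`-module structures: an equivariant
structure `(map, act)` extends uniquely to a `C#H`-structure `mapS` with
`mapS (f # h) m = S⁻¹(h) • (M(f)(m))`, and conversely a `C#H`-structure `mapS`
restricts uniquely to an equivariant structure via `M(f) = mapS (f # 1)` and
`h • m = mapS (id # S h) m`; these assignments are mutually inverse. -/
theorem statement1 (C : LeftHCat K H) (S : SmashCat C)
    (Sinv : H →ₗ[K] H)
    (hSinv₁ : ∀ h : H, HopfAlgebra.antipode (R := K) (Sinv h) = h)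
    (hSinv₂ : ∀ h : H, Sinv (HopfAlgebra.antipode (R := K) h) = h)
    (ob : C.Obj → Type) [∀ X, AddCommGroup (ob X)] [∀ X, Module K (ob X)] :
    (∀ (map : ∀ X Y : C.Obj, C.Hom X Y →ₗ[K] (ob Y →ₗ[K] ob X))
       (act : ∀ X, H →ₗ[K] ob X →ₗ[K] ob X),
      IsEqModData C ob map act →
        ∃! mapS : ∀ X Y : C.Obj, (C.Hom X Y ⊗[K] H) →ₗ[K] (ob Y →ₗ[K] ob X),
          IsRModMap K S.lin ob mapS ∧
          (∀ (X Y : C.Obj) (f : C.Hom X Y) (h : H) (m : ob Y),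
            mapS X Y (f ⊗ₜ[K] h) m = act X (Sinv h) (map X Y f m)) ∧
          (∀ (X Y : C.Obj) (f : C.Hom X Y) (m : ob Y),
            mapS X Y (f ⊗ₜ[K] (1 : H)) m = map X Y f m) ∧
          (∀ (X : C.Obj) (h : H) (m : ob X),
            mapS X X ((C.idm X) ⊗ₜ[K] (HopfAlgebra.antipode (R := K) h)) m
              = act X h m))
    ∧
    (∀ mapS : ∀ X Y : C.Obj, (C.Hom X Y ⊗[K] H) →ₗ[K] (ob Y →ₗ[K] ob X),
      IsRModMap K S.lin ob mapS →
        ∃! p : (∀ X Y : C.Obj, C.Hom X Y →ₗ[K] (ob Y →ₗ[K] ob X)) ×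
               (∀ X, H →ₗ[K] ob X →ₗ[K] ob X),
          IsEqModData C ob p.1 p.2 ∧
          (∀ (X Y : C.Obj) (f : C.Hom X Y) (m : ob Y),
            p.1 X Y f m = mapS X Y (f ⊗ₜ[K] (1 : H)) m) ∧
          (∀ (X : C.Obj) (h : H) (m : ob X),
            p.2 X h m = mapS X X ((C.idm X) ⊗ₜ[K] (HopfAlgebra.antipode (R := K) h)) m) ∧
          (∀ (X Y : C.Obj) (f : C.Hom X Y) (h : H) (m : ob Y),
            mapS X Y (f ⊗ₜ[K] h) m = p.2 X (Sinv h) (p.1 X Y f m))) :=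
  statement1' C S Sinv hSinv₁ hSinv₂ ob

end Statement1

end
end

section
/- Let C be a left H-category and let M, N be right (C#H)-modules. Then Hom_{Mod-C}(M,N) is a left H-module via (h·η)(X)(m) = Σ h_1(η(X)(S(h_2)m)), and its H-invariants are exactly the (C#H)-module morphisms: Hom_{Mod-C}(M,N)^H = Hom_{Mod-(C#H)}(M,N). -/
open CategoryTheory TensorProduct
noncomputable section

variable (K : Type) [Field K] (H : Type) [Ring H] [HopfAlgebra K H]

/-! ### Auxiliary material for `statement2` -/

namespace Stmt2Aux

namespace Coalgebra
universe v

/-- A representation of `comul a` with a bundled index type (compatibility layer). -/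
structure Repr (R : Type) {A : Type v} [CommSemiring R] [AddCommMonoid A] [Module R A]
    [CoalgebraStruct R A] (a : A) where
  {ι : Type v}
  index : Finset ι
  left : ι → A
  right : ι → A
  eq : ∑ i ∈ index, left i ⊗ₜ[R] right i = CoalgebraStruct.comul a

/-- The corresponding Mathlib representation. -/
def Repr.toNew {R : Type} {A : Type v} [CommSemiring R] [AddCommMonoid A] [Module R A]
    [CoalgebraStruct R A] {a : A} (r : Repr R a) : _root_.Coalgebra.Repr R a r.ι :=
  ⟨r.index, r.left, r.right, r.eq⟩

/-- An arbitrarily chosen representation. -/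
noncomputable def Repr.arbitrary (R : Type) {A : Type v} [CommSemiring R] [AddCommMonoid A]
    [Module R A] [CoalgebraStruct R A] (a : A) : Repr R a :=
  ⟨(_root_.Coalgebra.Repr.arbitrary R a).index, (_root_.Coalgebra.Repr.arbitrary R a).left,
    (_root_.Coalgebra.Repr.arbitrary R a).right, (_root_.Coalgebra.Repr.arbitrary R a).eq⟩

lemma sum_counit_tmul_eq {R : Type} {A : Type v} [CommSemiring R] [AddCommMonoid A]
    [Module R A] [_root_.Coalgebra R A] {a : A} (r : Repr R a) :
    ∑ i ∈ r.index, CoalgebraStruct.counit (R := R) (r.left i) ⊗ₜ r.right i =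
      (1 : R) ⊗ₜ[R] a :=
  _root_.Coalgebra.sum_counit_tmul_eq r.toNew

lemma sum_tmul_counit_eq {R : Type} {A : Type v} [CommSemiring R] [AddCommMonoid A]
    [Module R A] [_root_.Coalgebra R A] {a : A} (r : Repr R a) :
    ∑ i ∈ r.index, r.left i ⊗ₜ CoalgebraStruct.counit (R := R) (r.right i) =
      a ⊗ₜ[R] (1 : R) :=
  _root_.Coalgebra.sum_tmul_counit_eq r.toNew

lemma sum_tmul_tmul_eq {R : Type} {A : Type v} [CommSemiring R] [AddCommMonoid A]
    [Module R A] [_root_.Coalgebra R A] {a : A} (r : Repr R a)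
    (a₁ : (i : r.ι) → Repr R (r.left i)) (a₂ : (i : r.ι) → Repr R (r.right i)) :
    ∑ i ∈ r.index, ∑ j ∈ (a₁ i).index,
      (a₁ i).left j ⊗ₜ[R] ((a₁ i).right j ⊗ₜ[R] r.right i)
      = ∑ i ∈ r.index, ∑ j ∈ (a₂ i).index,
      r.left i ⊗ₜ[R] ((a₂ i).left j ⊗ₜ[R] (a₂ i).right j) :=
  _root_.Coalgebra.sum_tmul_tmul_eq r.toNew (fun i => (a₁ i).toNew) (fun i => (a₂ i).toNew)

theorem sum_map_tmul_tmul_eq {R : Type} {A : Type v} [CommSemiring R] [AddCommMonoid A]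
    [Module R A] [_root_.Coalgebra R A] {B : Type*} [AddCommMonoid B] [Module R B]
    {F : Type*} [FunLike F A B] [LinearMapClass F R A B] (f g h : F) (a : A) {repr : Repr R a}
    {a₁ : (i : repr.ι) → Repr R (repr.left i)} {a₂ : (i : repr.ι) → Repr R (repr.right i)} :
    ∑ i ∈ repr.index, ∑ j ∈ (a₂ i).index,
      f (repr.left i) ⊗ₜ (g ((a₂ i).left j) ⊗ₜ h ((a₂ i).right j)) =
    ∑ i ∈ repr.index, ∑ j ∈ (a₁ i).index,
      f ((a₁ i).left j) ⊗ₜ[R] (g ((a₁ i).right j) ⊗ₜ[R] h (repr.right i)) :=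
  _root_.Coalgebra.sum_map_tmul_tmul_eq f g h a (repr := repr.toNew)
    (a₁ := fun i => (a₁ i).toNew) (a₂ := fun i => (a₂ i).toNew)

end Coalgebra

namespace HopfAlgebra
universe v

lemma sum_antipode_mul_eq_smul {R : Type} {A : Type v} [CommSemiring R] [Semiring A]
    [_root_.HopfAlgebra R A] {a : A} (r : Coalgebra.Repr R a) :
    ∑ i ∈ r.index, HopfAlgebraStruct.antipode R (r.left i) * r.right i =
      CoalgebraStruct.counit (R := R) a • 1 :=
  _root_.HopfAlgebra.sum_antipode_mul_eq_smul r.toNew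

lemma sum_mul_antipode_eq_smul {R : Type} {A : Type v} [CommSemiring R] [Semiring A]
    [_root_.HopfAlgebra R A] {a : A} (r : Coalgebra.Repr R a) :
    ∑ i ∈ r.index, r.left i * HopfAlgebraStruct.antipode R (r.right i) =
      CoalgebraStruct.counit (R := R) a • 1 :=
  _root_.HopfAlgebra.sum_mul_antipode_eq_smul r.toNew

end HopfAlgebra

open Coalgebra HopfAlgebra LinearMap
open _root_.Coalgebra _root_.HopfAlgebra

section HopfPart
variable {K : Type} [Field K] {H : Type} [Ring H] [HopfAlgebra K H]
open Coalgebra HopfAlgebra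

variable {K : Type} [Field K] {H : Type} [Ring H] [HopfAlgebra K H]


section CoalgAux
variable {C : Type} [AddCommGroup C] [Module K C] [Coalgebra K C]

lemma sum_counit_left_smul {a : C} (r : Repr K a) :
    ∑ i ∈ r.index, counit (R := K) (r.left i) • r.right i = a := by
  have h := congrArg (TensorProduct.lid K C) (Coalgebra.sum_counit_tmul_eq (R := K) r)
  simp only [map_sum, TensorProduct.lid_tmul, one_smul] at h
  exact h

lemma sum_counit_right_smul {a : C} (r : Repr K a) :
    ∑ i ∈ r.index, counit (R := K) (r.right i) • r.left i = a := by
  have h := congrArg (TensorProduct.rid K C) (Coalgebra.sum_tmul_counit_eq (R := K) r)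
  simp only [map_sum, TensorProduct.rid_tmul, one_smul] at h
  exact h


lemma sum_counit_left_smul_map {V : Type} [AddCommGroup V] [Module K V] (L : C →ₗ[K] V)
    {a : C} (r : Repr K a) :
    ∑ i ∈ r.index, counit (R := K) (r.left i) • L (r.right i) = L a := by
  calc ∑ i ∈ r.index, counit (R := K) (r.left i) • L (r.right i)
      = L (∑ i ∈ r.index, counit (R := K) (r.left i) • r.right i) := by
        rw [map_sum]
        exact Finset.sum_congr rfl fun i _ => (map_smul L _ _).symm
    _ = L a := by rw [sum_counit_left_smul r]

lemma sum_counit_right_smul_map {V : Type} [AddCommGroup V] [Module K V] (L : C →ₗ[K] V)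
    {a : C} (r : Repr K a) :
    ∑ i ∈ r.index, counit (R := K) (r.right i) • L (r.left i) = L a := by
  calc ∑ i ∈ r.index, counit (R := K) (r.right i) • L (r.left i)
      = L (∑ i ∈ r.index, counit (R := K) (r.right i) • r.left i) := by
        rw [map_sum]
        exact Finset.sum_congr rfl fun i _ => (map_smul L _ _).symm
    _ = L a := by rw [sum_counit_right_smul r]

end CoalgAux

lemma antipode_one' : antipode (R := K) (1 : H) = 1 := by
  have h := HopfAlgebra.mul_antipode_rTensor_comul_apply (R := K) (1 : H)
  simpa [Bialgebra.comul_one, Algebra.TensorProduct.one_def] using h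

lemma counit_antipode' (a : H) :
    counit (R := K) (antipode (R := K) a) = counit (R := K) a := by
  obtain r := Coalgebra.Repr.arbitrary K a
  have h1 := congrArg (counit (R := K)) (sum_mul_antipode_eq_smul (R := K) r)
  rw [map_sum] at h1
  simp only [Bialgebra.counit_mul, map_smul, Bialgebra.counit_one, smul_eq_mul, mul_one] at h1
  calc counit (R := K) (antipode (R := K) a)
      = counit (R := K) (antipode (R := K)
          (∑ i ∈ r.index, counit (R := K) (r.left i) • r.right i)) := by
        rw [sum_counit_left_smul]
    _ = ∑ i ∈ r.index, counit (R := K) (r.left i) *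
          counit (R := K) (antipode (R := K) (r.right i)) := by
        rw [map_sum, map_sum]
        refine Finset.sum_congr rfl fun i _ => ?_
        rw [map_smul, map_smul, smul_eq_mul]
    _ = counit (R := K) a := h1

section Conv
variable (K) {C A : Type} [AddCommGroup C] [Module K C] [Coalgebra K C]
  [Ring A] [Algebra K A]

/-- Convolution product on `Hom(C, A)`. -/
noncomputable def conv (f g : C →ₗ[K] A) : C →ₗ[K] A :=
  LinearMap.mul' K A ∘ₗ TensorProduct.map f g ∘ₗ Coalgebra.comul

/-- Convolution unit. -/
noncomputable def convOne : C →ₗ[K] A := Algebra.linearMap K A ∘ₗ Coalgebra.counit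

lemma conv_repr (f g : C →ₗ[K] A) {c : C} (r : Repr K c) :
    conv K f g c = ∑ i ∈ r.index, f (r.left i) * g (r.right i) := by
  rw [conv, LinearMap.comp_apply, LinearMap.comp_apply, ← r.eq]
  rw [map_sum, map_sum]
  refine Finset.sum_congr rfl fun i _ => ?_
  rw [map_tmul, mul'_apply]

lemma conv_convOne (f : C →ₗ[K] A) : conv K f (convOne K) = f := by
  apply LinearMap.ext; intro c
  obtain r := Coalgebra.Repr.arbitrary K c
  rw [conv_repr K _ _ r]
  calc ∑ i ∈ r.index, f (r.left i) * convOne K (r.right i)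
      = ∑ i ∈ r.index, f (counit (R := K) (r.right i) • r.left i) := by
        refine Finset.sum_congr rfl fun i _ => ?_
        rw [map_smul]
        rw [convOne, LinearMap.comp_apply, Algebra.linearMap_apply, ← Algebra.commutes, ← Algebra.smul_def]
    _ = f c := by rw [← map_sum, sum_counit_right_smul r]

lemma convOne_conv (f : C →ₗ[K] A) : conv K (convOne K) f = f := by
  apply LinearMap.ext; intro c
  obtain r := Coalgebra.Repr.arbitrary K c
  rw [conv_repr K _ _ r]
  calc ∑ i ∈ r.index, convOne K (r.left i) * f (r.right i)
      = ∑ i ∈ r.index, f (counit (R := K) (r.left i) • r.right i) := by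
        refine Finset.sum_congr rfl fun i _ => ?_
        rw [map_smul, convOne, LinearMap.comp_apply, Algebra.linearMap_apply, ← Algebra.smul_def]
    _ = f c := by rw [← map_sum, sum_counit_left_smul r]

lemma conv_assoc (f g h : C →ₗ[K] A) :
    conv K (conv K f g) h = conv K f (conv K g h) := by
  apply LinearMap.ext; intro c
  obtain r := Coalgebra.Repr.arbitrary K c
  have E := Coalgebra.sum_map_tmul_tmul_eq (R := K) f g h c (repr := r)
    (a₁ := fun i => Coalgebra.Repr.arbitrary K (r.left i))
    (a₂ := fun i => Coalgebra.Repr.arbitrary K (r.right i))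
  have E2 := congrArg (fun t => (LinearMap.mul' K A)
    ((LinearMap.lTensor A (LinearMap.mul' K A)) t)) E
  simp only [map_sum, lTensor_tmul, mul'_apply] at E2
  rw [conv_repr K _ _ r, conv_repr K _ _ r]
  calc ∑ i ∈ r.index, conv K f g (r.left i) * h (r.right i)
      = ∑ i ∈ r.index, ∑ j ∈ (Coalgebra.Repr.arbitrary K (r.left i)).index,
          f ((Coalgebra.Repr.arbitrary K (r.left i)).left j) *
            (g ((Coalgebra.Repr.arbitrary K (r.left i)).right j) * h (r.right i)) := by
        refine Finset.sum_congr rfl fun i _ => ?_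
        rw [conv_repr K _ _ (Coalgebra.Repr.arbitrary K (r.left i)), Finset.sum_mul]
        exact Finset.sum_congr rfl fun j _ => by rw [mul_assoc]
    _ = ∑ i ∈ r.index, ∑ j ∈ (Coalgebra.Repr.arbitrary K (r.right i)).index,
          f (r.left i) * (g ((Coalgebra.Repr.arbitrary K (r.right i)).left j) *
            h ((Coalgebra.Repr.arbitrary K (r.right i)).right j)) := E2.symm
    _ = ∑ i ∈ r.index, f (r.left i) * conv K g h (r.right i) := by
        refine Finset.sum_congr rfl fun i _ => ?_
        rw [conv_repr K _ _ (Coalgebra.Repr.arbitrary K (r.right i)), Finset.mul_sum]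

lemma conv_inv_unique {f g g' : C →ₗ[K] A}
    (hg : conv K g f = convOne K) (hg' : conv K f g' = convOne K) : g = g' := by
  have h2 : conv K g (conv K f g') = conv K (conv K g f) g' := (conv_assoc K g f g').symm
  rw [hg', hg, conv_convOne, convOne_conv] at h2
  exact h2

end Conv

/-- Product representation. -/
noncomputable def mulRepr {a b : H} (ra : Repr K a) (rb : Repr K b) : Repr K (a * b) where
  index := ra.index ×ˢ rb.index
  left p := ra.left p.1 * rb.left p.2
  right p := ra.right p.1 * rb.right p.2
  eq := by
    rw [Bialgebra.comul_mul, ← ra.eq, ← rb.eq, Finset.sum_mul_sum]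
    rw [Finset.sum_product]
    refine Finset.sum_congr rfl fun i _ => Finset.sum_congr rfl fun j _ => ?_
    rw [Algebra.TensorProduct.tmul_mul_tmul]

/-- Representation of a pure tensor in `H ⊗ H`. -/
noncomputable def tmulRepr {a b : H} (ra : Repr K a) (rb : Repr K b) :
    Repr K (a ⊗ₜ[K] b : H ⊗[K] H) where
  index := ra.index ×ˢ rb.index
  left p := ra.left p.1 ⊗ₜ[K] rb.left p.2
  right p := ra.right p.1 ⊗ₜ[K] rb.right p.2
  eq := by
    have hc : Coalgebra.comul (R := K) (a ⊗ₜ[K] b) =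
        TensorProduct.tensorTensorTensorComm K H H H H
          (Coalgebra.comul (R := K) a ⊗ₜ[K] Coalgebra.comul (R := K) b) := rfl
    rw [hc, ← ra.eq, ← rb.eq, TensorProduct.sum_tmul, map_sum, Finset.sum_product]
    refine Finset.sum_congr rfl fun i _ => ?_
    rw [TensorProduct.tmul_sum, map_sum]
    refine Finset.sum_congr rfl fun j _ => ?_
    rw [TensorProduct.tensorTensorTensorComm_tmul]

lemma counit_tmul (x y : H) :
    counit (R := K) (x ⊗ₜ[K] y : H ⊗[K] H) = counit (R := K) x * counit (R := K) y := by
  simp [TensorProduct.counit_def, mul'_apply, mul_comm]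

lemma antipode_mul' (a b : H) :
    antipode (R := K) (a * b) = antipode (R := K) b * antipode (R := K) a := by
  have key : (antipode (R := K) ∘ₗ LinearMap.mul' K H : H ⊗[K] H →ₗ[K] H) =
      (LinearMap.mul' K H ∘ₗ TensorProduct.map (antipode (R := K)) (antipode (R := K))
        ∘ₗ (TensorProduct.comm K H H).toLinearMap) := by
    apply conv_inv_unique K (f := LinearMap.mul' K H)
    · -- conv (S ∘ mul) mul = convOne
      apply TensorProduct.ext'
      intro x y
      obtain rx := Coalgebra.Repr.arbitrary K x
      obtain ry := Coalgebra.Repr.arbitrary K y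
      rw [conv_repr K _ _ (tmulRepr rx ry)]
      simp only [tmulRepr, LinearMap.comp_apply, mul'_apply]
      rw [Finset.sum_product]
      have hs := sum_antipode_mul_eq_smul (R := K) (mulRepr rx ry)
      simp only [mulRepr] at hs
      rw [Finset.sum_product] at hs
      rw [hs, convOne, LinearMap.comp_apply, Algebra.linearMap_apply, Algebra.smul_def, mul_one,
        counit_tmul, Bialgebra.counit_mul]
    · -- conv mul (mul ∘ (S⊗S) ∘ comm) = convOne
      apply TensorProduct.ext'
      intro x y
      obtain rx := Coalgebra.Repr.arbitrary K x
      obtain ry := Coalgebra.Repr.arbitrary K y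
      rw [conv_repr K _ _ (tmulRepr rx ry)]
      simp only [tmulRepr, LinearMap.comp_apply, mul'_apply, LinearEquiv.coe_coe,
        TensorProduct.comm_tmul, TensorProduct.map_tmul]
      rw [Finset.sum_product]
      have inner : ∀ i, ∑ j ∈ ry.index, rx.left i * ry.left j *
            (antipode (R := K) (ry.right j) * antipode (R := K) (rx.right i)) =
          counit (R := K) y • (rx.left i * antipode (R := K) (rx.right i)) := by
        intro i
        calc ∑ j ∈ ry.index, rx.left i * ry.left j *
              (antipode (R := K) (ry.right j) * antipode (R := K) (rx.right i))
            = rx.left i * (∑ j ∈ ry.index, ry.left j * antipode (R := K) (ry.right j)) *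
                antipode (R := K) (rx.right i) := by
              rw [Finset.mul_sum, Finset.sum_mul]
              refine Finset.sum_congr rfl fun j _ => ?_
              rw [mul_assoc, ← mul_assoc (ry.left j), ← mul_assoc]
          _ = counit (R := K) y • (rx.left i * antipode (R := K) (rx.right i)) := by
              rw [sum_mul_antipode_eq_smul (R := K) ry, mul_smul_comm, mul_one,
                smul_mul_assoc]
      calc ∑ i ∈ rx.index, ∑ j ∈ ry.index, rx.left i * ry.left j *
            (antipode (R := K) (ry.right j) * antipode (R := K) (rx.right i))
          = ∑ i ∈ rx.index, counit (R := K) y •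
              (rx.left i * antipode (R := K) (rx.right i)) := by
            exact Finset.sum_congr rfl fun i _ => inner i
        _ = convOne K (x ⊗ₜ[K] y) := by
            rw [← Finset.smul_sum, sum_mul_antipode_eq_smul (R := K) rx, smul_smul,
              convOne, LinearMap.comp_apply, Algebra.linearMap_apply, Algebra.smul_def, mul_one,
              counit_tmul, mul_comm]
  have hk := congrArg (fun φ : H ⊗[K] H →ₗ[K] H => φ (a ⊗ₜ[K] b)) key
  simpa using hk


/-- Four-fold Sweedler shuffle: `∑ h₁₁ ⊗ h₁₂ ⊗ h₂₁ ⊗ h₂₂ = ∑ h₁ ⊗ h₂₁₁ ⊗ h₂₁₂ ⊗ h₂₂`. -/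
lemma quad_shuffle {h : H} (r : Repr K h)
    (r1 : ∀ i, Repr K (r.left i)) (r2 : ∀ i, Repr K (r.right i))
    (r22 : ∀ i j, Repr K ((r2 i).right j)) (t21 : ∀ i j, Repr K ((r2 i).left j)) :
    ∑ i ∈ r.index, ∑ j ∈ (r1 i).index, ∑ k ∈ (r2 i).index,
      (r1 i).left j ⊗ₜ[K] ((r1 i).right j ⊗ₜ[K] ((r2 i).left k ⊗ₜ[K] (r2 i).right k))
    = ∑ i ∈ r.index, ∑ j ∈ (r2 i).index, ∑ k ∈ (t21 i j).index,
      r.left i ⊗ₜ[K] ((t21 i j).left k ⊗ₜ[K] ((t21 i j).right k ⊗ₜ[K] (r2 i).right j)) := by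
  have E1 := Coalgebra.sum_tmul_tmul_eq (R := K) r r1 r2
  have E2 := congrArg (LinearMap.lTensor H (LinearMap.lTensor H (Coalgebra.comul (R := K)))) E1
  simp only [map_sum, lTensor_tmul] at E2
  calc ∑ i ∈ r.index, ∑ j ∈ (r1 i).index, ∑ k ∈ (r2 i).index,
        (r1 i).left j ⊗ₜ[K] ((r1 i).right j ⊗ₜ[K] ((r2 i).left k ⊗ₜ[K] (r2 i).right k))
      = ∑ i ∈ r.index, ∑ j ∈ (r1 i).index,
          (r1 i).left j ⊗ₜ[K] ((r1 i).right j ⊗ₜ[K] Coalgebra.comul (R := K) (r.right i)) := by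
        refine Finset.sum_congr rfl fun i _ => Finset.sum_congr rfl fun j _ => ?_
        rw [← (r2 i).eq, TensorProduct.tmul_sum, TensorProduct.tmul_sum]
    _ = ∑ i ∈ r.index, ∑ j ∈ (r2 i).index,
          r.left i ⊗ₜ[K] ((r2 i).left j ⊗ₜ[K] Coalgebra.comul (R := K) ((r2 i).right j)) := E2
    _ = ∑ i ∈ r.index, ∑ j ∈ (r2 i).index, ∑ k ∈ (r22 i j).index,
          r.left i ⊗ₜ[K] ((r2 i).left j ⊗ₜ[K] ((r22 i j).left k ⊗ₜ[K] (r22 i j).right k)) := by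
        refine Finset.sum_congr rfl fun i _ => Finset.sum_congr rfl fun j _ => ?_
        rw [← (r22 i j).eq, TensorProduct.tmul_sum, TensorProduct.tmul_sum]
    _ = ∑ i ∈ r.index, ∑ j ∈ (r2 i).index, ∑ k ∈ (t21 i j).index,
          r.left i ⊗ₜ[K] ((t21 i j).left k ⊗ₜ[K] ((t21 i j).right k ⊗ₜ[K] (r2 i).right j)) := by
        refine Finset.sum_congr rfl fun i _ => ?_
        have E3 := Coalgebra.sum_tmul_tmul_eq (R := K) (r2 i) (t21 i) (r22 i)
        have E4 := congrArg (TensorProduct.mk K H (H ⊗[K] (H ⊗[K] H)) (r.left i)) E3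
        simp only [map_sum, TensorProduct.mk_apply] at E4
        exact E4.symm

lemma comul_antipode' (a : H) :
    Coalgebra.comul (R := K) (antipode (R := K) a) =
      (TensorProduct.comm K H H)
        (TensorProduct.map (antipode (R := K)) (antipode (R := K))
          (Coalgebra.comul (R := K) a)) := by
  have key : ((Coalgebra.comul (R := K) (A := H)) ∘ₗ antipode (R := K) : H →ₗ[K] H ⊗[K] H) =
      ((TensorProduct.comm K H H).toLinearMap ∘ₗ
        TensorProduct.map (antipode (R := K)) (antipode (R := K)) ∘ₗ
          (Coalgebra.comul (R := K))) := by
    apply conv_inv_unique K (f := (Coalgebra.comul (R := K) : H →ₗ[K] H ⊗[K] H))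
    · -- conv (Δ ∘ S) Δ = convOne
      apply LinearMap.ext; intro h
      obtain r := Coalgebra.Repr.arbitrary K h
      rw [conv_repr K _ _ r]
      calc ∑ i ∈ r.index,
            ((Coalgebra.comul (R := K) (A := H)) ∘ₗ antipode (R := K)) (r.left i) *
              Coalgebra.comul (R := K) (r.right i)
          = Coalgebra.comul (R := K)
              (∑ i ∈ r.index, antipode (R := K) (r.left i) * r.right i) := by
            rw [map_sum]
            exact Finset.sum_congr rfl fun i _ => by
              rw [LinearMap.comp_apply, Bialgebra.comul_mul]
        _ = convOne K h := by
            rw [sum_antipode_mul_eq_smul (R := K) r, map_smul, Bialgebra.comul_one,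
              convOne, LinearMap.comp_apply, Algebra.linearMap_apply, Algebra.smul_def, mul_one]
    · -- conv Δ (τ ∘ (S ⊗ S) ∘ Δ) = convOne
      apply LinearMap.ext; intro h
      obtain r := Coalgebra.Repr.arbitrary K h
      set r1 : ∀ i, Repr K (r.left i) := fun i => Coalgebra.Repr.arbitrary K (r.left i) with hr1
      set r2 : ∀ i, Repr K (r.right i) := fun i => Coalgebra.Repr.arbitrary K (r.right i) with hr2
      set r22 : ∀ i j, Repr K ((r2 i).right j) :=
        fun i j => Coalgebra.Repr.arbitrary K ((r2 i).right j) with hr22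
      set t21 : ∀ i j, Repr K ((r2 i).left j) :=
        fun i j => Coalgebra.Repr.arbitrary K ((r2 i).left j) with ht21
      -- the multilinear collapse map
      set Θ : H ⊗[K] (H ⊗[K] (H ⊗[K] H)) →ₗ[K] H ⊗[K] H :=
        TensorProduct.map (LinearMap.mul' K H ∘ₗ LinearMap.lTensor H (antipode (R := K)))
            (LinearMap.mul' K H ∘ₗ LinearMap.lTensor H (antipode (R := K))) ∘ₗ
          (TensorProduct.assoc K H H (H ⊗[K] H)).symm.toLinearMap ∘ₗ
          LinearMap.lTensor H ((TensorProduct.comm K (H ⊗[K] H) H).toLinearMap) ∘ₗ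
          LinearMap.lTensor H ((TensorProduct.assoc K H H H).symm.toLinearMap) with hΘ
      have Θtmul : ∀ x₁ x₂ x₃ x₄ : H, Θ (x₁ ⊗ₜ[K] (x₂ ⊗ₜ[K] (x₃ ⊗ₜ[K] x₄))) =
          (x₁ * antipode (R := K) x₄) ⊗ₜ[K] (x₂ * antipode (R := K) x₃) := by
        intro x₁ x₂ x₃ x₄
        simp [hΘ, TensorProduct.assoc_symm_tmul, mul'_apply]
      have QS := congrArg Θ (quad_shuffle r r1 r2 r22 t21)
      simp only [map_sum, Θtmul] at QS
      rw [conv_repr K _ _ r]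
      calc ∑ i ∈ r.index, Coalgebra.comul (R := K) (r.left i) *
            ((TensorProduct.comm K H H).toLinearMap ∘ₗ
              TensorProduct.map (antipode (R := K)) (antipode (R := K)) ∘ₗ
                (Coalgebra.comul (R := K))) (r.right i)
          = ∑ i ∈ r.index, ∑ j ∈ (r1 i).index, ∑ k ∈ (r2 i).index,
              ((r1 i).left j * antipode (R := K) ((r2 i).right k)) ⊗ₜ[K]
                ((r1 i).right j * antipode (R := K) ((r2 i).left k)) := by
            refine Finset.sum_congr rfl fun i _ => ?_
            rw [LinearMap.comp_apply, LinearMap.comp_apply, ← (r1 i).eq, ← (r2 i).eq]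
            rw [map_sum, map_sum, Finset.sum_mul]
            refine Finset.sum_congr rfl fun j _ => ?_
            rw [Finset.mul_sum]
            refine Finset.sum_congr rfl fun k _ => ?_
            simp only [TensorProduct.map_tmul, LinearEquiv.coe_coe, TensorProduct.comm_tmul,
              Algebra.TensorProduct.tmul_mul_tmul]
        _ = ∑ i ∈ r.index, ∑ j ∈ (r2 i).index, ∑ k ∈ (t21 i j).index,
              (r.left i * antipode (R := K) ((r2 i).right j)) ⊗ₜ[K]
                ((t21 i j).left k * antipode (R := K) ((t21 i j).right k)) := QS
        _ = ∑ i ∈ r.index,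
              (r.left i * antipode (R := K) (r.right i)) ⊗ₜ[K] (1 : H) := by
            refine Finset.sum_congr rfl fun i _ => ?_
            calc ∑ j ∈ (r2 i).index, ∑ k ∈ (t21 i j).index,
                  (r.left i * antipode (R := K) ((r2 i).right j)) ⊗ₜ[K]
                    ((t21 i j).left k * antipode (R := K) ((t21 i j).right k))
                = ∑ j ∈ (r2 i).index,
                    (r.left i * antipode (R := K) ((r2 i).right j)) ⊗ₜ[K]
                      (counit (R := K) ((r2 i).left j) • (1 : H)) := by
                  refine Finset.sum_congr rfl fun j _ => ?_
                  rw [← TensorProduct.tmul_sum, sum_mul_antipode_eq_smul (R := K) (t21 i j)]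
              _ = (r.left i * antipode (R := K)
                    (∑ j ∈ (r2 i).index, counit (R := K) ((r2 i).left j) • (r2 i).right j))
                      ⊗ₜ[K] (1 : H) := by
                  rw [map_sum, Finset.mul_sum, TensorProduct.sum_tmul]
                  refine Finset.sum_congr rfl fun j _ => ?_
                  rw [TensorProduct.tmul_smul, map_smul, mul_smul_comm,
                    TensorProduct.smul_tmul']
              _ = (r.left i * antipode (R := K) (r.right i)) ⊗ₜ[K] (1 : H) := by
                  rw [sum_counit_left_smul (r2 i)]
        _ = convOne K h := by
            rw [← TensorProduct.sum_tmul, sum_mul_antipode_eq_smul (R := K) r,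
              ← TensorProduct.smul_tmul', convOne, LinearMap.comp_apply, Algebra.linearMap_apply,
              Algebra.algebraMap_eq_smul_one, Algebra.TensorProduct.one_def]
  have hk := congrArg (fun φ : H →ₗ[K] H ⊗[K] H => φ a) key
  simpa using hk

/-- Representation of `S a` from a representation of `a`. -/
noncomputable def antipodeRepr {a : H} (r : Repr K a) : Repr K (antipode (R := K) a) where
  index := r.index
  left i := antipode (R := K) (r.right i)
  right i := antipode (R := K) (r.left i)
  eq := by
    rw [comul_antipode' a, ← r.eq, map_sum, map_sum]
    refine Finset.sum_congr rfl fun i _ => ?_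
    rw [TensorProduct.map_tmul, TensorProduct.comm_tmul]


end HopfPart

section SmashPart
open LinearMap
variable {K : Type} [Field K] {H : Type} [Ring H] [HopfAlgebra K H]
  {C : LeftHCat K H} (S : SmashCat C)

/-- Right translation operators of a right `C#H`-module. -/
noncomputable def rho (M : RMod K S.lin) (X : C.Obj) : H →ₗ[K] M.ob X →ₗ[K] M.ob X :=
  M.map (X := X) (Y := X) ∘ₗ TensorProduct.mk K (C.Hom X X) H (C.idm X)

variable (M N : RMod K S.lin)

lemma rho_apply (X : C.Obj) (h : H) (m : M.ob X) :
    rho S M X h m = M.map ((C.idm X) ⊗ₜ[K] h) m := rfl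

lemma actOn_rho (X : C.Obj) (h : H) (m : M.ob X) :
    actOn S M X h m = rho S M X (antipode (R := K) h) m := rfl

lemma rho_one (X : C.Obj) (m : M.ob X) : rho S M X 1 m = m := by
  have h1 : rho S M X 1 = M.map (S.lin.idm X) := rfl
  rw [h1, M.map_id]
  rfl

lemma smash_comp_id_id (X : C.Obj) (h h' : H) :
    S.comp ((C.idm X) ⊗ₜ[K] h') ((C.idm X) ⊗ₜ[K] h) = (C.idm X) ⊗ₜ[K] (h * h') := by
  rw [S.comp_tmul]
  obtain r := Coalgebra.Repr.arbitrary K h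
  rw [← r.eq, map_sum]
  calc (∑ i ∈ r.index, TensorProduct.map
        (((C.comp (X := X) (Y := X) (Z := X)).flip (C.idm X)) ∘ₗ ((C.act X X).flip (C.idm X)))
        (LinearMap.mulRight K h') (r.left i ⊗ₜ[K] r.right i))
      = ∑ i ∈ r.index, (C.idm X) ⊗ₜ[K] (counit (R := K) (r.left i) • (r.right i * h')) := by
        refine Finset.sum_congr rfl fun i _ => ?_
        rw [TensorProduct.map_tmul, LinearMap.comp_apply, flip_apply, flip_apply, C.act_idm, map_smul,
          LinearMap.smul_apply, C.id_comp, mulRight_apply, TensorProduct.smul_tmul]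
    _ = (C.idm X) ⊗ₜ[K] (h * h') := by
        rw [← TensorProduct.tmul_sum]
        congr 1
        calc ∑ i ∈ r.index, counit (R := K) (r.left i) • (r.right i * h')
            = (∑ i ∈ r.index, counit (R := K) (r.left i) • r.right i) * h' := by
              rw [Finset.sum_mul]
              exact Finset.sum_congr rfl fun i _ => (smul_mul_assoc _ _ _).symm
          _ = h * h' := by rw [sum_counit_left_smul r]

lemma smash_comp_id_f {X Y : C.Obj} (h : H) (f : C.Hom X Y) :
    S.comp ((C.idm X) ⊗ₜ[K] h) (f ⊗ₜ[K] (1 : H)) = f ⊗ₜ[K] h := by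
  rw [S.comp_tmul, Bialgebra.comul_one, Algebra.TensorProduct.one_def, TensorProduct.map_tmul,
    LinearMap.comp_apply, flip_apply, flip_apply, C.act_one]
  rw [LinearMap.id_apply, C.id_comp, mulRight_apply, one_mul]

lemma smash_comp_f_id {X Y : C.Obj} (f : C.Hom X Y) (c : H) (rc : Repr K c) :
    S.comp (f ⊗ₜ[K] (1 : H)) ((C.idm Y) ⊗ₜ[K] c) =
      ∑ j ∈ rc.index, (C.act X Y (rc.left j) f) ⊗ₜ[K] rc.right j := by
  rw [S.comp_tmul, ← rc.eq, map_sum]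
  refine Finset.sum_congr rfl fun j _ => ?_
  rw [TensorProduct.map_tmul, LinearMap.comp_apply, flip_apply, flip_apply, C.comp_id, mulRight_apply,
    mul_one]

lemma rho_rho (X : C.Obj) (h h' : H) (m : M.ob X) :
    rho S M X h' (rho S M X h m) = rho S M X (h * h') m := by
  rw [rho_apply, rho_apply, rho_apply]
  have hc := congrArg (fun φ : M.ob X →ₗ[K] M.ob X => φ m)
    (M.map_comp (X := X) (Y := X) (Z := X) ((C.idm X) ⊗ₜ[K] h') ((C.idm X) ⊗ₜ[K] h))
  simp only [LinearMap.comp_apply] at hc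
  rw [← hc]
  exact congrArg (fun t => M.map t m) (smash_comp_id_id S X h h')

lemma rho_mapf {X Y : C.Obj} (h : H) (f : C.Hom X Y) (m : M.ob Y) :
    rho S M X h (M.map (f ⊗ₜ[K] (1 : H)) m) = M.map (f ⊗ₜ[K] h) m := by
  rw [rho_apply]
  have hc := congrArg (fun φ : M.ob Y →ₗ[K] M.ob X => φ m)
    (M.map_comp (X := X) (Y := X) (Z := Y) ((C.idm X) ⊗ₜ[K] h) (f ⊗ₜ[K] (1 : H)))
  simp only [LinearMap.comp_apply] at hc
  rw [← hc]
  exact congrArg (fun t => M.map t m) (smash_comp_id_f S h f)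

lemma mapf_rho {X Y : C.Obj} (f : C.Hom X Y) (c : H) (rc : Coalgebra.Repr K c) (m : M.ob Y) :
    M.map (f ⊗ₜ[K] (1 : H)) (rho S M Y c m) =
      ∑ j ∈ rc.index, M.map ((C.act X Y (rc.left j) f) ⊗ₜ[K] rc.right j) m := by
  rw [rho_apply]
  have hc := congrArg (fun φ : M.ob Y →ₗ[K] M.ob X => φ m)
    (M.map_comp (X := X) (Y := Y) (Z := Y) (f ⊗ₜ[K] (1 : H)) ((C.idm Y) ⊗ₜ[K] c))
  simp only [LinearMap.comp_apply] at hc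
  rw [← hc, show S.lin.comp (f ⊗ₜ[K] (1 : H)) ((C.idm Y) ⊗ₜ[K] c)
      = ∑ j ∈ rc.index, (C.act X Y (rc.left j) f) ⊗ₜ[K] rc.right j
    from smash_comp_f_id S f c rc]
  rw [map_sum]
  simp only [LinearMap.coe_sum, Finset.sum_apply]

lemma actOn_one_apply (X : C.Obj) (m : M.ob X) : actOn S M X 1 m = m := by
  rw [actOn_rho, antipode_one', rho_one]

lemma actOn_actOn (X : C.Obj) (a b : H) (m : M.ob X) :
    actOn S M X a (actOn S M X b m) = actOn S M X (a * b) m := by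
  rw [actOn_rho, actOn_rho, actOn_rho, rho_rho, ← antipode_mul']

lemma equivar {X Y : C.Obj} (f : C.Hom X Y) (k : H) (r : Coalgebra.Repr K k)
    (m : M.ob Y) :
    actOn S M X k (M.map (f ⊗ₜ[K] (1 : H)) m) =
      ∑ i ∈ r.index, M.map ((C.act X Y (r.right i) f) ⊗ₜ[K] (1 : H))
        (actOn S M Y (r.left i) m) := by
  obtain r1 : ∀ i, Coalgebra.Repr K (r.left i) := fun i => Coalgebra.Repr.arbitrary K (r.left i)
  obtain r2 : ∀ i, Coalgebra.Repr K (r.right i) := fun i => Coalgebra.Repr.arbitrary K (r.right i)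
  have hR : ∀ i ∈ r.index,
      M.map ((C.act X Y (r.right i) f) ⊗ₜ[K] (1 : H)) (actOn S M Y (r.left i) m) =
      ∑ j ∈ (r1 i).index,
        M.map ((C.act X Y (antipode (R := K) ((r1 i).right j) * r.right i) f) ⊗ₜ[K]
          (antipode (R := K) ((r1 i).left j))) m := by
    intro i _
    rw [actOn_rho, mapf_rho S M _ _ (antipodeRepr (r1 i)) m]
    refine Finset.sum_congr rfl fun j _ => ?_
    rw [C.act_mul, LinearMap.comp_apply]
    rfl
  rw [Finset.sum_congr rfl hR]
  rw [actOn_rho, rho_mapf]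
  set Θ : H ⊗[K] (H ⊗[K] H) →ₗ[K] M.ob X :=
    (((M.map (X := X) (Y := Y)).flip m).comp
      ((TensorProduct.map ((C.act X Y).flip f) LinearMap.id).comp
        (TensorProduct.comm K H H).toLinearMap)).comp
      (TensorProduct.map (antipode (R := K))
        (LinearMap.mul' K H ∘ₗ LinearMap.rTensor H (antipode (R := K)))) with hΘ
  have Θtmul : ∀ x y z : H, Θ (x ⊗ₜ[K] (y ⊗ₜ[K] z)) =
      M.map ((C.act X Y (antipode (R := K) y * z) f) ⊗ₜ[K] antipode (R := K) x) m := by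
    intro x y z
    rfl
  have QS := congrArg Θ (Coalgebra.sum_tmul_tmul_eq (R := K) r r1 r2)
  simp only [map_sum, Θtmul] at QS
  rw [QS]
  refine Eq.symm ?_
  calc (∑ i ∈ r.index, ∑ j ∈ (r2 i).index,
        M.map ((C.act X Y (antipode (R := K) ((r2 i).left j) * (r2 i).right j) f) ⊗ₜ[K]
          antipode (R := K) (r.left i)) m)
      = ∑ i ∈ r.index, counit (R := K) (r.right i) •
          M.map (f ⊗ₜ[K] antipode (R := K) (r.left i)) m := by
        refine Finset.sum_congr rfl fun i _ => ?_
        have e1 : ∑ j ∈ (r2 i).index,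
            M.map ((C.act X Y (antipode (R := K) ((r2 i).left j) * (r2 i).right j) f) ⊗ₜ[K]
              antipode (R := K) (r.left i)) m
            = M.map ((C.act X Y (∑ j ∈ (r2 i).index,
                antipode (R := K) ((r2 i).left j) * (r2 i).right j) f) ⊗ₜ[K]
                antipode (R := K) (r.left i)) m := by
          rw [map_sum, LinearMap.sum_apply, TensorProduct.sum_tmul, map_sum,
            LinearMap.coe_sum, Finset.sum_apply]
        rw [e1, sum_antipode_mul_eq_smul (R := K) (r2 i), map_smul, LinearMap.smul_apply,
          C.act_one, LinearMap.id_apply, ← TensorProduct.smul_tmul', map_smul,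
          LinearMap.smul_apply]
    _ = M.map (f ⊗ₜ[K] antipode (R := K) k) m := by
        calc ∑ i ∈ r.index, counit (R := K) (r.right i) •
              M.map (f ⊗ₜ[K] antipode (R := K) (r.left i)) m
            = M.map (f ⊗ₜ[K] antipode (R := K)
                (∑ i ∈ r.index, counit (R := K) (r.right i) • r.left i)) m := by
              rw [map_sum, TensorProduct.tmul_sum, map_sum, LinearMap.coe_sum,
                Finset.sum_apply]
              refine Finset.sum_congr rfl fun i _ => ?_
              rw [map_smul, TensorProduct.tmul_smul, map_smul, LinearMap.smul_apply]
          _ = M.map (f ⊗ₜ[K] antipode (R := K) k) m := by rw [sum_counit_right_smul r]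

lemma adjRHS_repr (η : restrictOb S M ⟶ restrictOb S N) (h : H) (X : C.Obj) (m : M.ob X)
    (r : Coalgebra.Repr K h) :
    adjRHS S η h X m = ∑ i ∈ r.index,
      actOn S N X (r.left i) (η.app X (actOn S M X (antipode (R := K) (r.right i)) m)) := by
  rw [adjRHS, ← r.eq, map_sum]
  rfl

lemma eta_natural (η : restrictOb S M ⟶ restrictOb S N) {X Y : C.Obj} (g : C.Hom X Y)
    (w : M.ob Y) :
    η.app X (M.map (g ⊗ₜ[K] (1 : H)) w) = N.map (g ⊗ₜ[K] (1 : H)) (η.app Y w) :=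
  η.natural g w

lemma adjRHS_natural (η : restrictOb S M ⟶ restrictOb S N) (h : H) {X Y : C.Obj}
    (f : C.Hom X Y) (m : M.ob Y) :
    adjRHS S η h X (M.map (f ⊗ₜ[K] (1 : H)) m) =
      N.map (f ⊗ₜ[K] (1 : H)) (adjRHS S η h Y m) := by
  obtain r := Coalgebra.Repr.arbitrary K h
  obtain r1 : ∀ i, Coalgebra.Repr K (r.left i) :=
    fun i => Coalgebra.Repr.arbitrary K (r.left i)
  obtain r2 : ∀ i, Coalgebra.Repr K (r.right i) :=
    fun i => Coalgebra.Repr.arbitrary K (r.right i)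
  obtain r22 : ∀ i j, Coalgebra.Repr K ((r2 i).right j) :=
    fun i j => Coalgebra.Repr.arbitrary K ((r2 i).right j)
  obtain t21 : ∀ i j, Coalgebra.Repr K ((r2 i).left j) :=
    fun i j => Coalgebra.Repr.arbitrary K ((r2 i).left j)
  rw [adjRHS_repr S M N η h X _ r, adjRHS_repr S M N η h Y m r]
  -- expand the left-hand side into a triple sum
  have step1 : ∀ i ∈ r.index,
      actOn S N X (r.left i) (η.app X (actOn S M X (antipode (R := K) (r.right i))
        (M.map (f ⊗ₜ[K] (1 : H)) m))) =
      ∑ j ∈ (r2 i).index, ∑ l ∈ (r1 i).index,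
        N.map ((C.act X Y ((r1 i).right l * antipode (R := K) ((r2 i).left j)) f) ⊗ₜ[K] (1 : H))
          (actOn S N Y ((r1 i).left l)
            (η.app Y (actOn S M Y (antipode (R := K) ((r2 i).right j)) m))) := by
    intro i _
    rw [show actOn S M X (antipode (R := K) (r.right i)) (M.map (f ⊗ₜ[K] (1 : H)) m)
        = ∑ j ∈ (r2 i).index,
            M.map ((C.act X Y (antipode (R := K) ((r2 i).left j)) f) ⊗ₜ[K] (1 : H))
              (actOn S M Y (antipode (R := K) ((r2 i).right j)) m)
      from equivar S M f _ (antipodeRepr (r2 i)) m]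
    erw [map_sum, map_sum]
    refine Finset.sum_congr rfl fun j _ => ?_
    erw [eta_natural S M N η, equivar S N _ (r.left i) (r1 i)]
    refine Finset.sum_congr rfl fun l _ => ?_
    rw [C.act_mul, LinearMap.comp_apply]
  rw [Finset.sum_congr rfl step1]
  -- the structural collapse map
  set Ω : H ⊗[K] (H ⊗[K] (H ⊗[K] H)) →ₗ[K] (H ⊗[K] H) ⊗[K] (H ⊗[K] H) :=
    (TensorProduct.assoc K H H (H ⊗[K] H)).symm.toLinearMap ∘ₗ
      LinearMap.lTensor H ((TensorProduct.comm K (H ⊗[K] H) H).toLinearMap) ∘ₗ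
      LinearMap.lTensor H ((TensorProduct.assoc K H H H).symm.toLinearMap) with hΩ
  set qmap : H ⊗[K] H →ₗ[K] N.ob Y :=
    TensorProduct.lift (actOn S N Y) ∘ₗ
      LinearMap.lTensor H ((η.app Y) ∘ₗ
        (((actOn S M Y) ∘ₗ (HopfAlgebra.antipode (R := K) (A := H))).flip m)) with hq
  set pmap : H ⊗[K] H →ₗ[K] H :=
    LinearMap.mul' K H ∘ₗ LinearMap.lTensor H (antipode (R := K)) with hp
  set smap : H →ₗ[K] (N.ob Y →ₗ[K] N.ob X) :=
    (N.map (X := X) (Y := Y)) ∘ₗ ((TensorProduct.mk K (C.Hom X Y) H).flip (1 : H)) ∘ₗ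
      ((C.act X Y).flip f) with hs
  set Θ : H ⊗[K] (H ⊗[K] (H ⊗[K] H)) →ₗ[K] N.ob X :=
    TensorProduct.lift smap ∘ₗ (TensorProduct.comm K (N.ob Y) H).toLinearMap ∘ₗ
      TensorProduct.map qmap pmap ∘ₗ Ω with hΘ
  have Θtm : ∀ x1 x2 x3 x4 : H, Θ (x1 ⊗ₜ[K] (x2 ⊗ₜ[K] (x3 ⊗ₜ[K] x4))) =
      N.map ((C.act X Y (x2 * antipode (R := K) x3) f) ⊗ₜ[K] (1 : H))
        (actOn S N Y x1 (η.app Y (actOn S M Y (antipode (R := K) x4) m))) := by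
    intro x1 x2 x3 x4
    rfl
  have QS := congrArg Θ (quad_shuffle r r1 r2 r22 t21)
  simp only [map_sum, Θtm] at QS
  calc ∑ i ∈ r.index, ∑ j ∈ (r2 i).index, ∑ l ∈ (r1 i).index,
        N.map ((C.act X Y ((r1 i).right l * antipode (R := K) ((r2 i).left j)) f) ⊗ₜ[K] (1 : H))
          (actOn S N Y ((r1 i).left l)
            (η.app Y (actOn S M Y (antipode (R := K) ((r2 i).right j)) m)))
      = ∑ i ∈ r.index, ∑ l ∈ (r1 i).index, ∑ j ∈ (r2 i).index,
        N.map ((C.act X Y ((r1 i).right l * antipode (R := K) ((r2 i).left j)) f) ⊗ₜ[K] (1 : H))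
          (actOn S N Y ((r1 i).left l)
            (η.app Y (actOn S M Y (antipode (R := K) ((r2 i).right j)) m))) := by
        exact Finset.sum_congr rfl fun i _ => Finset.sum_comm
    _ = ∑ i ∈ r.index, ∑ j ∈ (r2 i).index, ∑ k ∈ (t21 i j).index,
        N.map ((C.act X Y ((t21 i j).left k * antipode (R := K) ((t21 i j).right k)) f)
            ⊗ₜ[K] (1 : H))
          (actOn S N Y (r.left i)
            (η.app Y (actOn S M Y (antipode (R := K) ((r2 i).right j)) m))) := QS
    _ = ∑ i ∈ r.index,
        N.map (f ⊗ₜ[K] (1 : H))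
          (actOn S N Y (r.left i)
            (η.app Y (actOn S M Y (antipode (R := K) (r.right i)) m))) := by
        refine Finset.sum_congr rfl fun i _ => ?_
        set Lmap : H →ₗ[K] N.ob X :=
          (N.map (f ⊗ₜ[K] (1 : H))) ∘ₗ (actOn S N Y (r.left i)) ∘ₗ (η.app Y) ∘ₗ
            (((actOn S M Y) ∘ₗ (HopfAlgebra.antipode (R := K) (A := H))).flip m) with hL
        have hinner : ∀ j ∈ (r2 i).index, ∑ k ∈ (t21 i j).index,
            N.map ((C.act X Y ((t21 i j).left k * antipode (R := K) ((t21 i j).right k)) f)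
                ⊗ₜ[K] (1 : H))
              (actOn S N Y (r.left i)
                (η.app Y (actOn S M Y (antipode (R := K) ((r2 i).right j)) m)))
            = counit (R := K) ((r2 i).left j) • Lmap ((r2 i).right j) := by
          intro j _
          have e1 : ∑ k ∈ (t21 i j).index,
              N.map ((C.act X Y ((t21 i j).left k * antipode (R := K) ((t21 i j).right k)) f)
                  ⊗ₜ[K] (1 : H))
                (actOn S N Y (r.left i)
                  (η.app Y (actOn S M Y (antipode (R := K) ((r2 i).right j)) m)))
              = N.map ((C.act X Y (∑ k ∈ (t21 i j).index,
                    (t21 i j).left k * antipode (R := K) ((t21 i j).right k)) f)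
                  ⊗ₜ[K] (1 : H))
                (actOn S N Y (r.left i)
                  (η.app Y (actOn S M Y (antipode (R := K) ((r2 i).right j)) m))) := by
            rw [map_sum, LinearMap.sum_apply, TensorProduct.sum_tmul, map_sum,
              LinearMap.coe_sum, Finset.sum_apply]
          rw [e1, sum_mul_antipode_eq_smul (R := K) (t21 i j), map_smul, LinearMap.smul_apply,
            C.act_one, LinearMap.id_apply, ← TensorProduct.smul_tmul', map_smul,
            LinearMap.smul_apply]
          rfl
        rw [Finset.sum_congr rfl hinner]
        have e2 : ∑ j ∈ (r2 i).index, counit (R := K) ((r2 i).left j) • Lmap ((r2 i).right j)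
            = Lmap (r.right i) := by
          calc ∑ j ∈ (r2 i).index, counit (R := K) ((r2 i).left j) • Lmap ((r2 i).right j)
              = ∑ j ∈ (r2 i).index, Lmap (counit (R := K) ((r2 i).left j) • (r2 i).right j) := by
                exact Finset.sum_congr rfl fun j _ => (map_smul Lmap _ _).symm
            _ = Lmap (∑ j ∈ (r2 i).index, counit (R := K) ((r2 i).left j) • (r2 i).right j) :=
                (map_sum Lmap _ _).symm
            _ = Lmap (r.right i) := by rw [sum_counit_left_smul (r2 i)]
        rw [e2]
        rfl
    _ = N.map (f ⊗ₜ[K] (1 : H)) (∑ i ∈ r.index,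
          actOn S N Y (r.left i)
            (η.app Y (actOn S M Y (antipode (R := K) (r.right i)) m))) := by
        rw [map_sum]

/-- `adjRHS` bundled as a linear map in `m`. -/
noncomputable def appLin (h : H) (η : restrictOb S M ⟶ restrictOb S N) (X : C.Obj) :
    M.ob X →ₗ[K] N.ob X where
  toFun m := adjRHS S η h X m
  map_add' m m' := by
    show adjRHS S η h X (m + m') = adjRHS S η h X m + adjRHS S η h X m'
    obtain r := Coalgebra.Repr.arbitrary K h
    rw [adjRHS_repr S M N η h X _ r, adjRHS_repr S M N η h X m r, adjRHS_repr S M N η h X m' r,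
      ← Finset.sum_add_distrib]
    exact Finset.sum_congr rfl fun i _ => by erw [map_add, map_add, map_add]
  map_smul' c m := by
    show adjRHS S η h X (c • m) = c • adjRHS S η h X m
    obtain r := Coalgebra.Repr.arbitrary K h
    rw [adjRHS_repr S M N η h X _ r, adjRHS_repr S M N η h X m r, Finset.smul_sum]
    exact Finset.sum_congr rfl fun i _ => by erw [map_smul, map_smul, map_smul]

/-- The `H`-action on `C`-module morphisms. -/
noncomputable def hAct : H →ₗ[K] (restrictOb S M ⟶ restrictOb S N) →ₗ[K]
    (restrictOb S M ⟶ restrictOb S N) where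
  toFun h :=
    { toFun := fun η =>
        { app := fun X => appLin S M N h η X
          natural := fun {X Y} f m => adjRHS_natural S M N η h f m }
      map_add' := fun η ν => by
        apply RModHom.app_injective
        funext X
        apply LinearMap.ext
        intro m
        show adjRHS S (η + ν) h X m = adjRHS S η h X m + adjRHS S ν h X m
        obtain r := Coalgebra.Repr.arbitrary K h
        rw [adjRHS_repr S M N _ h X m r, adjRHS_repr S M N η h X m r,
          adjRHS_repr S M N ν h X m r, ← Finset.sum_add_distrib]
        refine Finset.sum_congr rfl fun i _ => ?_
        erw [RModHom.add_app, LinearMap.add_apply, map_add]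
      map_smul' := fun c η => by
        apply RModHom.app_injective
        funext X
        apply LinearMap.ext
        intro m
        show adjRHS S (c • η) h X m = c • adjRHS S η h X m
        obtain r := Coalgebra.Repr.arbitrary K h
        rw [adjRHS_repr S M N _ h X m r, adjRHS_repr S M N η h X m r, Finset.smul_sum]
        refine Finset.sum_congr rfl fun i _ => ?_
        erw [RModHom.smul_app, LinearMap.smul_apply, map_smul] }
  map_add' h h' := by
    apply LinearMap.ext; intro η
    apply RModHom.app_injective
    funext X
    apply LinearMap.ext; intro m
    show adjRHS S η (h + h') X m = adjRHS S η h X m + adjRHS S η h' X m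
    simp only [adjRHS, map_add]
  map_smul' c h := by
    apply LinearMap.ext; intro η
    apply RModHom.app_injective
    funext X
    apply LinearMap.ext; intro m
    show adjRHS S η (c • h) X m = c • adjRHS S η h X m
    simp only [adjRHS, map_smul]

lemma adjRHS_one (η : restrictOb S M ⟶ restrictOb S N) (X : C.Obj) (m : M.ob X) :
    adjRHS S η 1 X m = η.app X m := by
  have e : Coalgebra.comul (R := K) (1 : H) = (1 : H) ⊗ₜ[K] (1 : H) := by
    rw [Bialgebra.comul_one, Algebra.TensorProduct.one_def]
  rw [adjRHS, e]
  show actOn S N X 1 (η.app X (actOn S M X (antipode (R := K) 1) m)) = η.app X m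
  erw [antipode_one', actOn_one_apply, actOn_one_apply]

lemma adjRHS_mul (a b : H) (η : restrictOb S M ⟶ restrictOb S N) (X : C.Obj) (m : M.ob X) :
    adjRHS S η (a * b) X m = adjRHS S (hAct S M N b η) a X m := by
  obtain ra := Coalgebra.Repr.arbitrary K a
  obtain rb := Coalgebra.Repr.arbitrary K b
  rw [adjRHS_repr S M N η (a * b) X m (mulRepr ra rb), adjRHS_repr S M N _ a X m ra]
  show (∑ p ∈ ra.index ×ˢ rb.index, actOn S N X (ra.left p.1 * rb.left p.2)
      (η.app X (actOn S M X (antipode (R := K) (ra.right p.1 * rb.right p.2)) m))) = _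
  rw [Finset.sum_product]
  refine Finset.sum_congr rfl fun i _ => ?_
  have hb : (hAct S M N b η).app X (actOn S M X (antipode (R := K) (ra.right i)) m)
      = ∑ j ∈ rb.index, actOn S N X (rb.left j)
          (η.app X (actOn S M X (antipode (R := K) (rb.right j))
            (actOn S M X (antipode (R := K) (ra.right i)) m))) := by
    show adjRHS S η b X _ = _
    rw [adjRHS_repr S M N η b X _ rb]
  rw [hb, map_sum]
  refine Finset.sum_congr rfl fun j _ => ?_
  show actOn S N X (ra.left i * rb.left j)
      (η.app X (actOn S M X (antipode (R := K) (ra.right i * rb.right j)) m)) = _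
  rw [antipode_mul']
  erw [← actOn_actOn S M, ← actOn_actOn S N]

lemma inv_step1 (η : restrictOb S M ⟶ restrictOb S N)
    (hinv : ∀ (h : H) (X : C.Obj) (m : M.ob X),
      adjRHS S η h X m = counit (R := K) h • η.app X m)
    (c : H) (X : C.Obj) (m : M.ob X) :
    η.app X (actOn S M X c m) = actOn S N X c (η.app X m) := by
  obtain r := Coalgebra.Repr.arbitrary K c
  obtain r1 : ∀ i, Coalgebra.Repr K (r.left i) := fun i => Coalgebra.Repr.arbitrary K (r.left i)
  obtain r2 : ∀ i, Coalgebra.Repr K (r.right i) :=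
    fun i => Coalgebra.Repr.arbitrary K (r.right i)
  set Θ : H ⊗[K] (H ⊗[K] H) →ₗ[K] N.ob X :=
    TensorProduct.lift (actOn S N X) ∘ₗ
      LinearMap.lTensor H ((η.app X) ∘ₗ
        (TensorProduct.lift ((actOn S M X) ∘ₗ (HopfAlgebra.antipode (R := K) (A := H))) ∘ₗ
          LinearMap.lTensor H ((actOn S M X).flip m))) with hΘ
  have Θtm : ∀ x y z : H, Θ (x ⊗ₜ[K] (y ⊗ₜ[K] z)) =
      actOn S N X x (η.app X (actOn S M X (antipode (R := K) y) (actOn S M X z m))) := by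
    intro x y z; rfl
  have QS := congrArg Θ (Coalgebra.sum_tmul_tmul_eq (R := K) r r1 r2)
  simp only [map_sum, Θtm] at QS
  have hA : ∑ i ∈ r.index, ∑ j ∈ (r1 i).index,
      actOn S N X ((r1 i).left j)
        (η.app X (actOn S M X (antipode (R := K) ((r1 i).right j))
          (actOn S M X (r.right i) m)))
      = η.app X (actOn S M X c m) := by
    calc (∑ i ∈ r.index, ∑ j ∈ (r1 i).index,
          actOn S N X ((r1 i).left j)
            (η.app X (actOn S M X (antipode (R := K) ((r1 i).right j))
              (actOn S M X (r.right i) m))))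
        = (∑ i ∈ r.index, counit (R := K) (r.left i) •
            η.app X (actOn S M X (r.right i) m) : N.ob X) := by
          refine Finset.sum_congr rfl fun i _ => ?_
          rw [← adjRHS_repr S M N η (r.left i) X _ (r1 i), hinv]
      _ = @id (N.ob X) (η.app X (actOn S M X c m)) :=
          sum_counit_left_smul_map ((η.app X) ∘ₗ ((actOn S M X).flip m)) r
  have hB : ∑ i ∈ r.index, ∑ j ∈ (r2 i).index,
      actOn S N X (r.left i)
        (η.app X (actOn S M X (antipode (R := K) ((r2 i).left j))
          (actOn S M X ((r2 i).right j) m)))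
      = actOn S N X c (η.app X m) := by
    calc (∑ i ∈ r.index, ∑ j ∈ (r2 i).index,
          actOn S N X (r.left i)
            (η.app X (actOn S M X (antipode (R := K) ((r2 i).left j))
              (actOn S M X ((r2 i).right j) m))))
        = ∑ i ∈ r.index, counit (R := K) (r.right i) •
            actOn S N X (r.left i) (η.app X m) := by
          refine Finset.sum_congr rfl fun i _ => ?_
          calc ∑ j ∈ (r2 i).index, actOn S N X (r.left i)
                (η.app X (actOn S M X (antipode (R := K) ((r2 i).left j))
                  (actOn S M X ((r2 i).right j) m)))
              = actOn S N X (r.left i) (η.app X (actOn S M X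
                  (∑ j ∈ (r2 i).index,
                    antipode (R := K) ((r2 i).left j) * (r2 i).right j) m)) := by
                erw [map_sum, LinearMap.sum_apply, map_sum, map_sum]
                exact Finset.sum_congr rfl fun j _ => by rw [actOn_actOn]
            _ = counit (R := K) (r.right i) • actOn S N X (r.left i) (η.app X m) := by
                erw [sum_antipode_mul_eq_smul (R := K) (r2 i), map_smul, LinearMap.smul_apply,
                  actOn_one_apply, map_smul, map_smul]
      _ = actOn S N X c (η.app X m) :=
          sum_counit_right_smul_map ((actOn S N X).flip (η.app X m)) r
  rw [← hA, QS, hB]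

lemma inv_stepi (η : restrictOb S M ⟶ restrictOb S N)
    (hinv : ∀ (h : H) (X : C.Obj) (m : M.ob X),
      adjRHS S η h X m = counit (R := K) h • η.app X m)
    (k : H) (r : Coalgebra.Repr K k) (X : C.Obj) (m : M.ob X) :
    ∑ i ∈ r.index, rho S N X (antipode (R := K) (r.right i))
      (η.app X (rho S M X (r.left i) m)) = counit (R := K) k • η.app X m := by
  have e : ∀ i ∈ r.index, rho S N X (antipode (R := K) (r.right i))
      (η.app X (rho S M X (r.left i) m))
      = η.app X (rho S M X (r.left i * antipode (R := K) (r.right i)) m) := by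
    intro i _
    have h1 := inv_step1 S M N η hinv (r.right i) X (rho S M X (r.left i) m)
    erw [actOn_rho, actOn_rho] at h1
    erw [← h1, rho_rho]
  rw [Finset.sum_congr rfl e]
  calc ∑ i ∈ r.index, η.app X (rho S M X (r.left i * antipode (R := K) (r.right i)) m)
      = ((η.app X) ∘ₗ ((rho S M X).flip m))
          (∑ i ∈ r.index, r.left i * antipode (R := K) (r.right i)) := by
        rw [map_sum]; rfl
    _ = counit (R := K) k • η.app X m := by
        rw [sum_mul_antipode_eq_smul (R := K) r, map_smul]
        congr 1
        show η.app X (rho S M X 1 m) = η.app X m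
        rw [rho_one]

lemma inv_step2 (η : restrictOb S M ⟶ restrictOb S N)
    (hinv : ∀ (h : H) (X : C.Obj) (m : M.ob X),
      adjRHS S η h X m = counit (R := K) h • η.app X m)
    (k : H) (X : C.Obj) (m : M.ob X) :
    η.app X (rho S M X k m) = rho S N X k (η.app X m) := by
  obtain r := Coalgebra.Repr.arbitrary K k
  obtain r1 : ∀ i, Coalgebra.Repr K (r.left i) := fun i => Coalgebra.Repr.arbitrary K (r.left i)
  obtain r2 : ∀ i, Coalgebra.Repr K (r.right i) :=
    fun i => Coalgebra.Repr.arbitrary K (r.right i)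
  set Θ : H ⊗[K] (H ⊗[K] H) →ₗ[K] N.ob X :=
    TensorProduct.lift (rho S N X) ∘ₗ (TensorProduct.comm K (N.ob X) H).toLinearMap ∘ₗ
      TensorProduct.map ((η.app X) ∘ₗ ((rho S M X).flip m))
        (LinearMap.mul' K H ∘ₗ LinearMap.rTensor H (antipode (R := K))) with hΘ
  have Θtm : ∀ x y z : H, Θ (x ⊗ₜ[K] (y ⊗ₜ[K] z)) =
      rho S N X (antipode (R := K) y * z) (η.app X (rho S M X x m)) := by
    intro x y z; rfl
  have QS := congrArg Θ (Coalgebra.sum_tmul_tmul_eq (R := K) r r1 r2)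
  simp only [map_sum, Θtm] at QS
  have hA : ∑ i ∈ r.index, ∑ j ∈ (r1 i).index,
      rho S N X (antipode (R := K) ((r1 i).right j) * r.right i)
        (η.app X (rho S M X ((r1 i).left j) m))
      = rho S N X k (η.app X m) := by
    calc (∑ i ∈ r.index, ∑ j ∈ (r1 i).index,
          rho S N X (antipode (R := K) ((r1 i).right j) * r.right i)
            (η.app X (rho S M X ((r1 i).left j) m)))
        = ∑ i ∈ r.index, counit (R := K) (r.left i) • rho S N X (r.right i) (η.app X m) := by
          refine Finset.sum_congr rfl fun i _ => ?_
          calc ∑ j ∈ (r1 i).index, rho S N X (antipode (R := K) ((r1 i).right j) * r.right i)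
                (η.app X (rho S M X ((r1 i).left j) m))
              = rho S N X (r.right i) (∑ j ∈ (r1 i).index,
                  rho S N X (antipode (R := K) ((r1 i).right j))
                    (η.app X (rho S M X ((r1 i).left j) m))) := by
                rw [map_sum]
                exact Finset.sum_congr rfl fun j _ => (rho_rho S N X _ _ _).symm
            _ = counit (R := K) (r.left i) • rho S N X (r.right i) (η.app X m) := by
                erw [inv_stepi S M N η hinv (r.left i) (r1 i) X m, map_smul]
        _ = rho S N X k (η.app X m) :=
          sum_counit_left_smul_map ((rho S N X).flip (η.app X m)) r
  have hB : ∑ i ∈ r.index, ∑ j ∈ (r2 i).index,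
      rho S N X (antipode (R := K) ((r2 i).left j) * (r2 i).right j)
        (η.app X (rho S M X (r.left i) m))
      = η.app X (rho S M X k m) := by
    calc (∑ i ∈ r.index, ∑ j ∈ (r2 i).index,
          rho S N X (antipode (R := K) ((r2 i).left j) * (r2 i).right j)
            (η.app X (rho S M X (r.left i) m)))
        = (∑ i ∈ r.index, counit (R := K) (r.right i) •
            η.app X (rho S M X (r.left i) m) : N.ob X) := by
          refine Finset.sum_congr rfl fun i _ => ?_
          calc ∑ j ∈ (r2 i).index,
                rho S N X (antipode (R := K) ((r2 i).left j) * (r2 i).right j)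
                  (η.app X (rho S M X (r.left i) m))
              = rho S N X (∑ j ∈ (r2 i).index,
                  antipode (R := K) ((r2 i).left j) * (r2 i).right j)
                  (η.app X (rho S M X (r.left i) m)) := by
                erw [map_sum, LinearMap.coe_sum, Finset.sum_apply]
            _ = @id (N.ob X) (counit (R := K) (r.right i) • η.app X (rho S M X (r.left i) m)) := by
                show _ = counit (R := K) (r.right i) • η.app X (rho S M X (r.left i) m)
                erw [sum_antipode_mul_eq_smul (R := K) (r2 i), map_smul, LinearMap.smul_apply]
                congr 1
                exact rho_one S N X _
        _ = @id (N.ob X) (η.app X (rho S M X k m)) :=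
          sum_counit_right_smul_map ((η.app X) ∘ₗ ((rho S M X).flip m)) r
  rw [← hB, ← QS, hA]

lemma inv_natural (η : restrictOb S M ⟶ restrictOb S N)
    (hinv : ∀ (h : H) (X : C.Obj) (m : M.ob X),
      adjRHS S η h X m = counit (R := K) h • η.app X m)
    {X Y : C.Obj} (φ : C.Hom X Y ⊗[K] H) (m : M.ob Y) :
    η.app X (M.map φ m) = N.map φ (η.app Y m) := by
  induction φ using TensorProduct.induction_on with
  | zero => simp; exact map_zero (η.app X)
  | tmul f h =>
      rw [← rho_mapf S M h f m, inv_step2 S M N η hinv, eta_natural S M N η,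
        rho_mapf S N h f (η.app Y m)]
  | add x y hx hy =>
      rw [map_add, map_add, LinearMap.add_apply]
      erw [LinearMap.add_apply, map_add]
      rw [hx, hy]
      rfl

end SmashPart
end Stmt2Aux

section Statement2
variable {K : Type} [Field K] {H : Type} [Ring H] [HopfAlgebra K H]

open Stmt2Aux

/-- **Statement 2.** Let `C` be a left `H`-category and let `M`, `N` be right
`C#H`-modules.  Then the space of right `C`-module morphisms `Hom_{Mod-C}(M,N)`
(between the restrictions of `M` and `N`) carries a left `H`-module structure given
by `(h • η)(X)(m) = ∑ h₁ (η X (S(h₂) m))`, and its `H`-invariants are exactly the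
`C#H`-module morphisms `M ⟶ N`. -/
theorem statement2 (C : LeftHCat K H) (S : SmashCat C) (M N : RMod K S.lin) :
    ∃ act : H →ₗ[K] (restrictOb S M ⟶ restrictOb S N) →ₗ[K]
        (restrictOb S M ⟶ restrictOb S N),
      (act 1 = LinearMap.id) ∧
      (∀ a b : H, act (a * b) = (act a) ∘ₗ (act b)) ∧
      (∀ (h : H) (η : restrictOb S M ⟶ restrictOb S N) (X : C.Obj) (m : M.ob X),
        (act h η).app X m = adjRHS S η h X m) ∧
      (∀ η : restrictOb S M ⟶ restrictOb S N,
        (∀ h : H, act h η = Coalgebra.counit (R := K) h • η) ↔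
          ∃ η' : M ⟶ N, ∀ X, η'.app X = η.app X) := by
  classical
  refine ⟨hAct S M N, ?_, ?_, ?_, ?_⟩
  · apply LinearMap.ext
    intro η
    apply RModHom.app_injective
    funext X
    apply LinearMap.ext
    intro m
    exact adjRHS_one S M N η X m
  · intro a b
    apply LinearMap.ext
    intro η
    apply RModHom.app_injective
    funext X
    apply LinearMap.ext
    intro m
    exact adjRHS_mul S M N a b η X m
  · intro h η X m
    rfl
  · intro η
    constructor
    · intro hinv
      have hinvp : ∀ (h : H) (X : C.Obj) (m : M.ob X),
          adjRHS S η h X m = Coalgebra.counit (R := K) h • η.app X m := by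
        intro h X m
        exact congrArg (fun θ : restrictOb S M ⟶ restrictOb S N => θ.app X m) (hinv h)
      exact ⟨{ app := fun X => η.app X
               natural := fun {X Y} φ m => inv_natural S M N η hinvp φ m },
             fun X => rfl⟩
    · rintro ⟨η', hη'⟩ h
      apply RModHom.app_injective
      funext X
      apply LinearMap.ext
      intro m
      show adjRHS S η h X m = Coalgebra.counit (R := K) h • η.app X m
      obtain r := Stmt2Aux.Coalgebra.Repr.arbitrary K h
      rw [adjRHS_repr S M N η h X m r]
      have hcomm : ∀ (c : H) (w : M.ob X),
          η.app X (actOn S M X c w) = actOn S N X c (η.app X w) := by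
        intro c w
        have hn := η'.natural (f := (C.idm X) ⊗ₜ[K] (HopfAlgebra.antipode (R := K) c)) w
        rw [hη' X] at hn
        exact hn
      calc ∑ i ∈ r.index, actOn S N X (r.left i)
            (η.app X (actOn S M X (HopfAlgebra.antipode (R := K) (r.right i)) m))
          = ∑ i ∈ r.index, actOn S N X
              (r.left i * HopfAlgebra.antipode (R := K) (r.right i)) (η.app X m) := by
            refine Finset.sum_congr rfl fun i _ => ?_
            erw [hcomm, actOn_actOn]
        _ = actOn S N X (∑ i ∈ r.index,
              r.left i * HopfAlgebra.antipode (R := K) (r.right i)) (η.app X m) := by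
            erw [map_sum, LinearMap.coe_sum, Finset.sum_apply]
        _ = @id (N.ob X) (Coalgebra.counit (R := K) h • η.app X m) := by
            show _ = Coalgebra.counit (R := K) h • η.app X m
            erw [Stmt2Aux.HopfAlgebra.sum_mul_antipode_eq_smul (R := K) r, map_smul,
              LinearMap.smul_apply, actOn_one_apply]
            rfl

end Statement2

end
end
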